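/- arXiv:1411.4643 — 10 statements merged into one kernel-verified Lean document; each statement's English description precedes it below -/
import Mathlib

section
/- Under Cartan's multiplication rules for the algebra A_n^m, if all the indices u_r (for r = m+1,...,n) appearing in rule 3 are pairwise distinct, then I_s I_p = 0 for all s, p ∈ {m+1,...,n}. -/
/-!
Since `I_{u_s}` acts as a unit on `I_s`, we have `I_s I_p = I_{u_s} (I_s I_p)`. The product
`I_s I_p` is a combination of the `I_k` with `k > s`, and `I_{u_s}` annihilates each of them
because `u_k ≠ u_s`.
-/

theorem mul_sum_smul_eq_zero {R A ι : Type*} [Semiring R] [NonUnitalNonAssocSemiring A]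
    [Module R A] [SMulCommClass R A A] (s : Finset ι) (c : ι → R) (v : ι → A) (e : A)
    (h : ∀ k ∈ s, e * v k = 0) :
    e * ∑ k ∈ s, c k • v k = 0 := by
  rw [Finset.mul_sum]
  exact Finset.sum_eq_zero fun k hk => by rw [mul_smul_comm, h k hk, smul_zero]

theorem proposition_two_general (n m : ℕ) (A : Type*)
    [CommRing A] [Algebra ℂ A]
    (I : Module.Basis (Fin n) ℂ A)
    (Υ : Fin n → Fin n → Fin n → ℂ)
    (hnil : ∀ r s : Fin n, m ≤ r.val → m ≤ s.val →
      I r * I s = ∑ k ∈ Finset.univ.filter (fun k : Fin n => max r.val s.val < k.val),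
        Υ r s k • I k)
    (u : Fin n → Fin n)
    (hu : ∀ s : Fin n, m ≤ s.val → (u s).val < m)
    (hmul3 : ∀ s : Fin n, m ≤ s.val → ∀ r : Fin n, r.val < m →
      I r * I s = if r = u s then I s else 0)
    -- all the `u r` are pairwise distinct
    (hdist : ∀ s p : Fin n, m ≤ s.val → m ≤ p.val → u s = u p → s = p) :
    ∀ s p : Fin n, m ≤ s.val → m ≤ p.val → I s * I p = 0 := by
  intro s p hs hp
  have hunit : I (u s) * I s = I s := by rw [hmul3 s hs (u s) (hu s hs), if_pos rfl]
  have hkill : ∀ k ∈ Finset.univ.filter (fun k : Fin n => max s.val p.val < k.val),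
      I (u s) * I k = 0 := by
    intro k hk
    have hsk : s.val < k.val := (le_max_left _ _).trans_lt (Finset.mem_filter.1 hk).2
    have hmk : m ≤ k.val := hs.trans hsk.le
    have hne : u s ≠ u k := fun h => hsk.ne (congrArg Fin.val (hdist s k hs hmk h))
    rw [hmul3 k hmk (u s) (hu s hs), if_neg hne]
  calc I s * I p = I (u s) * (I s * I p) := by rw [← mul_assoc, hunit]
    _ = 0 := by rw [hnil s p hs hp]; exact mul_sum_smul_eq_zero _ _ _ _ hkill

/-- Proposition 2: in the algebra `A_n^m` with Cartan's multiplication rules, if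
all the indices `u r` (for nilpotent indices `r`) are pairwise distinct, then
all products of nilpotent basis vectors vanish. -/
theorem proposition_two (n m : ℕ) (hm : m ≤ n) (A : Type*)
    [CommRing A] [Algebra ℂ A]
    (I : Module.Basis (Fin n) ℂ A)
    (hidem : ∀ r s : Fin n, r.val < m → s.val < m →
      I r * I s = if r = s then I r else 0)
    (Υ : Fin n → Fin n → Fin n → ℂ)
    (hnil : ∀ r s : Fin n, m ≤ r.val → m ≤ s.val →
      I r * I s = ∑ k ∈ Finset.univ.filter (fun k : Fin n => max r.val s.val < k.val),
        Υ r s k • I k)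
    (u : Fin n → Fin n)
    (hu : ∀ s : Fin n, m ≤ s.val → (u s).val < m)
    (hmul3 : ∀ s : Fin n, m ≤ s.val → ∀ r : Fin n, r.val < m →
      I r * I s = if r = u s then I s else 0)
    -- all the `u r` are pairwise distinct
    (hdist : ∀ s p : Fin n, m ≤ s.val → m ≤ p.val → u s = u p → s = p) :
    ∀ s p : Fin n, m ≤ s.val → m ≤ p.val → I s * I p = 0 :=
  proposition_two_general n m A I Υ hnil u hu hmul3 hdist
end

section
/- For each u ∈ {1,...,m}, the set 𝓘_u = span{I_k : k ≠ u, 1 ≤ k ≤ n} is a maximal ideal of A_n^m, and the intersection of all these ideals 𝓘_1 ∩ ... ∩ 𝓘_m equals the radical 𝓡 = span{I_k : m+1 ≤ k ≤ n}. -/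
/-!
For `w < m` the coordinate functional `I.coord w` is multiplicative: on two idempotents this is
the orthogonality relation, and as soon as one factor is nilpotent the product lies in the span
of the nilpotent basis vectors, where every idempotent coordinate vanishes. It is therefore a
character of `A_n^m`, and `𝓘_w` is its kernel. The intersection of the kernels consists of the
vectors with vanishing idempotent coordinates, which is `𝓡`.
-/

open Submodule

namespace Module.Basis

variable {ι R M : Type*} [CommSemiring R] [AddCommMonoid M] [Module R M]

theorem mem_span_image_iff_repr_eq_zero (b : Basis ι R M) (s : Set ι) (x : M) :
    x ∈ span R (b '' s) ↔ ∀ k ∉ s, b.repr x k = 0 := by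
  rw [mem_span_image]
  exact forall_congr' fun k => by rw [Finset.mem_coe, Finsupp.mem_support_iff, not_imp_comm]

theorem mem_span_image_ne_iff_coord_eq_zero (b : Basis ι R M) (w : ι) (x : M) :
    x ∈ span R (b '' {k | k ≠ w}) ↔ b.coord w x = 0 := by
  simp [mem_span_image_iff_repr_eq_zero]

theorem map_mul_of_map_mul_basis {A B : Type*} [Semiring A] [Algebra R A] [Semiring B]
    [Algebra R B] (b : Basis ι R A) (f : A →ₗ[R] B)
    (h : ∀ i j, f (b i * b j) = f (b i) * f (b j)) (x y : A) :
    f (x * y) = f x * f y := by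
  have : (LinearMap.mul R A).compr₂ f = (LinearMap.mul R B).compl₁₂ f f :=
    b.ext fun i => b.ext fun j => h i j
  exact LinearMap.congr_fun₂ this x y

end Module.Basis

theorem AlgHom.ker_isMaximal {K A : Type*} [Field K] [Ring A] [Algebra K A] (φ : A →ₐ[K] K) :
    (RingHom.ker φ).IsMaximal :=
  RingHom.ker_isMaximal_of_surjective φ fun c => ⟨algebraMap K A c, φ.commutes c⟩

section CartanBasis

variable {K A : Type*} [CommSemiring K] [CommSemiring A] [Algebra K A] {n m : ℕ}
  (I : Module.Basis (Fin n) K A)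

theorem mul_basis_mem_span_nilpotent (Υ : Fin n → Fin n → Fin n → K)
    (hnil : ∀ r s : Fin n, m ≤ r.val → m ≤ s.val →
      I r * I s = ∑ k ∈ Finset.univ.filter (fun k : Fin n => max r.val s.val < k.val),
        Υ r s k • I k)
    (u : Fin n → Fin n)
    (hmul3 : ∀ s : Fin n, m ≤ s.val → ∀ r : Fin n, r.val < m →
      I r * I s = if r = u s then I s else 0)
    (r : Fin n) {s : Fin n} (hs : m ≤ s.val) :
    I r * I s ∈ span K (I '' {k | m ≤ k.val}) := by
  rcases lt_or_ge r.val m with hr | hr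
  · rw [hmul3 s hs r hr]
    split_ifs
    · exact subset_span ⟨s, hs, rfl⟩
    · exact zero_mem _
  · rw [hnil r s hr hs]
    refine sum_mem fun k hk => smul_mem _ _ (subset_span ⟨k, ?_, rfl⟩)
    have := (Finset.mem_filter.mp hk).2
    show m ≤ k.val
    omega

theorem coord_eq_zero_of_mem_span_nilpotent {w : Fin n} (hw : w.val < m) (x : A)
    (hx : x ∈ span K (I '' {k | m ≤ k.val})) : I.coord w x = 0 :=
  (I.mem_span_image_iff_repr_eq_zero _ x).mp hx w (by simpa using hw)

theorem coord_mul_basis (hidem : ∀ r s : Fin n, r.val < m → s.val < m →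
      I r * I s = if r = s then I r else 0)
    (Υ : Fin n → Fin n → Fin n → K)
    (hnil : ∀ r s : Fin n, m ≤ r.val → m ≤ s.val →
      I r * I s = ∑ k ∈ Finset.univ.filter (fun k : Fin n => max r.val s.val < k.val),
        Υ r s k • I k)
    (u : Fin n → Fin n)
    (hmul3 : ∀ s : Fin n, m ≤ s.val → ∀ r : Fin n, r.val < m →
      I r * I s = if r = u s then I s else 0)
    {w : Fin n} (hw : w.val < m) (r s : Fin n) :
    I.coord w (I r * I s) = I.coord w (I r) * I.coord w (I s) := by
  have coord_nilpotent {t : Fin n} (ht : m ≤ t.val) : I.coord w (I t) = 0 :=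
    coord_eq_zero_of_mem_span_nilpotent I hw _ (subset_span ⟨t, ht, rfl⟩)
  have coord_mul_nilpotent (r : Fin n) {t : Fin n} (ht : m ≤ t.val) : I.coord w (I r * I t) = 0 :=
    coord_eq_zero_of_mem_span_nilpotent I hw _
      (mul_basis_mem_span_nilpotent I Υ hnil u hmul3 r ht)
  rcases lt_or_ge s.val m with hs | hs
  · rcases lt_or_ge r.val m with hr | hr
    · have coord_self (k : Fin n) : I.coord w (I k) = if k = w then 1 else 0 := by
        simp [Finsupp.single_apply]
      rw [hidem r s hr hs]
      by_cases hrs : r = s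
      · subst hrs
        rw [if_pos rfl, coord_self]
        split_ifs <;> simp
      · rw [if_neg hrs, map_zero, coord_self, coord_self]
        split_ifs with hrw hsw <;> simp only [mul_one, mul_zero]
        exact absurd (hrw.trans hsw.symm) hrs
    · rw [mul_comm, coord_mul_nilpotent s hr, coord_nilpotent hr, zero_mul]
  · rw [coord_mul_nilpotent r hs, coord_nilpotent hs, mul_zero]

theorem coord_one (hone : ∑ w ∈ Finset.univ.filter (fun w : Fin n => w.val < m), I w = 1)
    {w : Fin n} (hw : w.val < m) : I.coord w 1 = 1 := by
  rw [← hone, map_sum]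
  simp [Finsupp.single_apply, hw]

end CartanBasis

theorem maximal_ideals_and_radical_general (n m : ℕ) (A : Type*)
    [CommRing A] [Algebra ℂ A]
    (I : Module.Basis (Fin n) ℂ A)
    (hidem : ∀ r s : Fin n, r.val < m → s.val < m →
      I r * I s = if r = s then I r else 0)
    (Υ : Fin n → Fin n → Fin n → ℂ)
    (hnil : ∀ r s : Fin n, m ≤ r.val → m ≤ s.val →
      I r * I s = ∑ k ∈ Finset.univ.filter (fun k : Fin n => max r.val s.val < k.val),
        Υ r s k • I k)
    (u : Fin n → Fin n)
    (hmul3 : ∀ s : Fin n, m ≤ s.val → ∀ r : Fin n, r.val < m →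
      I r * I s = if r = u s then I s else 0)
    -- `1 = Σ_{u=1}^m I_u`
    (hone : ∑ w ∈ Finset.univ.filter (fun w : Fin n => w.val < m), I w = 1) :
    (∀ w : Fin n, w.val < m → ∃ J : Ideal A,
        (J : Set A) = (Submodule.span ℂ (I '' {k : Fin n | k ≠ w}) : Set A) ∧ J.IsMaximal)
    ∧ (⨅ w : {w : Fin n // w.val < m},
          Submodule.span ℂ (I '' {k : Fin n | k ≠ (w : Fin n)}))
        = Submodule.span ℂ (I '' {k : Fin n | m ≤ k.val}) := by
  constructor
  · intro w hw
    let φ : A →ₐ[ℂ] ℂ := AlgHom.ofLinearMap (I.coord w) (coord_one I hone hw)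
      (I.map_mul_of_map_mul_basis _ (coord_mul_basis I hidem Υ hnil u hmul3 hw))
    refine ⟨RingHom.ker φ, ?_, φ.ker_isMaximal⟩
    ext x
    exact (I.mem_span_image_ne_iff_coord_eq_zero w x).symm
  · ext x
    simp only [Submodule.mem_iInf, Module.Basis.mem_span_image_iff_repr_eq_zero,
      Set.mem_ofPred_eq, not_not, forall_eq, not_le, Subtype.forall]

/-- For each `u < m`, the span `𝓘_u` of `{I_k : k ≠ u}` is a maximal ideal of
`A_n^m`, and the intersection of all of them is the radical
`𝓡 = span{I_k : m ≤ k}`. -/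
theorem maximal_ideals_and_radical (n m : ℕ) (hm : m ≤ n) (A : Type*)
    [CommRing A] [Algebra ℂ A]
    (I : Module.Basis (Fin n) ℂ A)
    (hidem : ∀ r s : Fin n, r.val < m → s.val < m →
      I r * I s = if r = s then I r else 0)
    (Υ : Fin n → Fin n → Fin n → ℂ)
    (hnil : ∀ r s : Fin n, m ≤ r.val → m ≤ s.val →
      I r * I s = ∑ k ∈ Finset.univ.filter (fun k : Fin n => max r.val s.val < k.val),
        Υ r s k • I k)
    (u : Fin n → Fin n)
    (hu : ∀ s : Fin n, m ≤ s.val → (u s).val < m)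
    (hmul3 : ∀ s : Fin n, m ≤ s.val → ∀ r : Fin n, r.val < m →
      I r * I s = if r = u s then I s else 0)
    -- `1 = Σ_{u=1}^m I_u`
    (hone : ∑ w ∈ Finset.univ.filter (fun w : Fin n => w.val < m), I w = 1) :
    (∀ w : Fin n, w.val < m → ∃ J : Ideal A,
        (J : Set A) = (Submodule.span ℂ (I '' {k : Fin n | k ≠ w}) : Set A) ∧ J.IsMaximal)
    ∧ (⨅ w : {w : Fin n // w.val < m},
          Submodule.span ℂ (I '' {k : Fin n | k ≠ (w : Fin n)}))
        = Submodule.span ℂ (I '' {k : Fin n | m ≤ k.val}) :=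
  maximal_ideals_and_radical_general n m A I hidem Υ hnil u hmul3 hone
end

section
/- Let e_1 = 1, e_2 = Σ_r a_r I_r, e_3 = Σ_r b_r I_r in A_n^m and ζ = x e_1 + y e_2 + z e_3 with x,y,z ∈ ℝ, and set ξ_u = x + y a_u + z b_u for u = 1,...,m. For t ∈ ℂ with t ≠ ξ_u for all u = 1,...,m, the element t e_1 − ζ is invertible in A_n^m, and its inverse equals Σ_{r=1}^n A_r I_r where A_u = 1/(t − ξ_u) for u ≤ m, A_{m+1} = T_{m+1}/(t − ξ_{u_{m+1}})², and A_p = T_p/(t − ξ_{u_p})² + (1/(t − ξ_{u_p})) Σ_{r=m+1}^{p−1} A_r B_{r,p} for p = m+2,...,n, where T_p := y a_p + z b_p and B_{r,p} := Σ_{s=m+1}^{p−1} T_s Υ^s_{r,p}. -/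
/-!
Split `t e₁ - ζ = D - N` into the part `D = Σ_{w ≤ m} (t - ξ_w) I_w` on the idempotents and the
nilpotent part `N = Σ_{s > m} T_s I_s`, and the candidate inverse likewise as `E + Y`. The
idempotents are orthogonal, so `D E = 1`, and `(D - N)(E + Y) = 1` reduces to
`D Y - E N - Y N = 0`. Since `I_w I_s = δ_{w, u_s} I_s` and the multiplication table of the
nilpotent `I_s` is strictly triangular, all three products are combinations of the `I_p`, `p > m`,
and the coefficient of `I_p` vanishes precisely by the recurrence defining `A_p`.
-/

open Finset

theorem sum_eq_sum_filter_lt_add_sum_filter_le {M : Type*} [AddCommMonoid M] {n : ℕ}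
    (m : ℕ) (f : Fin n → M) :
    ∑ i, f i = ∑ i ∈ univ.filter (fun i : Fin n => i.val < m), f i
      + ∑ i ∈ univ.filter (fun i : Fin n => m ≤ i.val), f i := by
  rw [← sum_filter_add_sum_filter_not univ (fun i : Fin n => i.val < m)]
  simp only [not_lt]

section

variable {K A : Type*} [CommSemiring K] [Semiring A] [Algebra K A]

theorem sum_smul_mul_sum_smul_of_orthogonal {ι : Type*} [DecidableEq ι] (s : Finset ι)
    (e : ι → A) (he : ∀ i ∈ s, ∀ j ∈ s, e i * e j = if i = j then e i else 0) (α β : ι → K) :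
    (∑ i ∈ s, α i • e i) * (∑ i ∈ s, β i • e i) = ∑ i ∈ s, (α i * β i) • e i := by
  rw [sum_mul_sum]
  refine sum_congr rfl fun i hi => ?_
  rw [sum_eq_single_of_mem i hi fun j hj hji => by
      rw [smul_mul_smul_comm, he i hi j hj, if_neg hji.symm, smul_zero],
    smul_mul_smul_comm, he i hi i hi, if_pos rfl]

theorem sum_smul_mul_sum_smul_of_mul_eq_ite {ι κ : Type*} [DecidableEq ι] (s : Finset ι)
    (e : ι → A) (t : Finset κ) (f : κ → A) (u : κ → ι) (hu : ∀ k ∈ t, u k ∈ s)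
    (hef : ∀ i ∈ s, ∀ k ∈ t, e i * f k = if i = u k then f k else 0) (α : ι → K) (β : κ → K) :
    (∑ i ∈ s, α i • e i) * (∑ k ∈ t, β k • f k) = ∑ k ∈ t, (α (u k) * β k) • f k := by
  rw [sum_mul_sum, sum_comm]
  refine sum_congr rfl fun k hk => ?_
  rw [sum_eq_single_of_mem (u k) (hu k hk) fun i hi hik => by
      rw [smul_mul_smul_comm, hef i hi k hk, if_neg hik, smul_zero],
    smul_mul_smul_comm, hef _ (hu k hk) k hk, if_pos rfl]

theorem sum_smul_mul_sum_smul_of_strictly_triangular {n m : ℕ} (I : Fin n → A)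
    (Υ : Fin n → Fin n → Fin n → K)
    (hnil : ∀ r s : Fin n, m ≤ r.val → m ≤ s.val →
      I r * I s = ∑ k ∈ univ.filter (fun k : Fin n => max r.val s.val < k.val), Υ r s k • I k)
    (α β : Fin n → K) :
    (∑ r ∈ univ.filter (fun r : Fin n => m ≤ r.val), α r • I r)
        * (∑ s ∈ univ.filter (fun s : Fin n => m ≤ s.val), β s • I s)
      = ∑ k ∈ univ.filter (fun k : Fin n => m ≤ k.val),
          (∑ r ∈ univ.filter (fun r : Fin n => m ≤ r.val ∧ r < k),
            α r * ∑ s ∈ univ.filter (fun s : Fin n => m ≤ s.val ∧ s < k), β s * Υ r s k) • I k := by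
  calc _ = ∑ r ∈ univ.filter (fun r : Fin n => m ≤ r.val),
        ∑ s ∈ univ.filter (fun s : Fin n => m ≤ s.val),
          ∑ k ∈ univ.filter (fun k : Fin n => max r.val s.val < k.val),
            (α r * (β s * Υ r s k)) • I k := by
        rw [sum_mul_sum]
        refine sum_congr rfl fun r hr => sum_congr rfl fun s hs => ?_
        rw [smul_mul_smul_comm, hnil r s (mem_filter.1 hr).2 (mem_filter.1 hs).2, smul_sum]
        simp only [smul_smul, mul_assoc]
    _ = ∑ r ∈ univ.filter (fun r : Fin n => m ≤ r.val),
        ∑ k ∈ univ.filter (fun k : Fin n => r < k),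
          ∑ s ∈ univ.filter (fun s : Fin n => m ≤ s.val ∧ s < k),
            (α r * (β s * Υ r s k)) • I k := by
        refine sum_congr rfl fun r _ => sum_comm' fun s k => ?_
        simp only [mem_filter, mem_univ, true_and, Fin.lt_def]
        omega
    _ = ∑ k ∈ univ.filter (fun k : Fin n => m ≤ k.val),
        ∑ r ∈ univ.filter (fun r : Fin n => m ≤ r.val ∧ r < k),
          ∑ s ∈ univ.filter (fun s : Fin n => m ≤ s.val ∧ s < k),
            (α r * (β s * Υ r s k)) • I k := by
        refine sum_comm' fun r k => ?_
        simp only [mem_filter, mem_univ, true_and, Fin.lt_def]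
        omega
    _ = _ := by simp only [← sum_smul, ← mul_sum]

end

theorem algebraMap_sub_eq_sum_smul_sub_sum_smul {K A : Type*} [CommRing K] [Ring A]
    [Algebra K A] {n m : ℕ} (I : Fin n → A)
    (hone : ∑ w ∈ univ.filter (fun w : Fin n => w.val < m), I w = 1)
    (a b : Fin n → K) (x y z t : K) (e₂ e₃ ζ : A)
    (he₂ : e₂ = ∑ r, a r • I r) (he₃ : e₃ = ∑ r, b r • I r)
    (hζ : ζ = x • (1 : A) + y • e₂ + z • e₃) :
    algebraMap K A t - ζ
      = ∑ w ∈ univ.filter (fun w : Fin n => w.val < m), (t - (x + y * a w + z * b w)) • I w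
        - ∑ s ∈ univ.filter (fun s : Fin n => m ≤ s.val), (y * a s + z * b s) • I s := by
  rw [Algebra.algebraMap_eq_smul_one, hζ, he₂, he₃, ← hone,
    sum_eq_sum_filter_lt_add_sum_filter_le m fun r => a r • I r,
    sum_eq_sum_filter_lt_add_sum_filter_le m fun r => b r • I r]
  simp only [smul_add, sub_smul, add_smul, sum_sub_distrib, sum_add_distrib, mul_smul, ← smul_sum]
  abel

theorem sub_mul_add_eq_one {R : Type*} [CommRing R] {d e y ν : R} (hde : d * e = 1)
    (h : d * y - e * ν - y * ν = 0) : (d - ν) * (e + y) = 1 := by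
  linear_combination hde + h

theorem mul_sub_mul_sub_eq_zero_of_eq_div_sq_add {F : Type*} [Field F] {d c c₀ τ σ : F}
    (hd : d ≠ 0) (hc₀ : c₀ = 1 / d) (hc : c = τ / d ^ 2 + 1 / d * σ) : d * c - c₀ * τ - σ = 0 := by
  subst hc₀ hc
  field_simp
  ring

theorem resolvent_expansion_general (n m : ℕ) (A : Type*)
    [CommRing A] [Algebra ℂ A]
    (I : Module.Basis (Fin n) ℂ A)
    (hidem : ∀ r s : Fin n, r.val < m → s.val < m →
      I r * I s = if r = s then I r else 0)
    (Υ : Fin n → Fin n → Fin n → ℂ)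
    (hnil : ∀ r s : Fin n, m ≤ r.val → m ≤ s.val →
      I r * I s = ∑ k ∈ Finset.univ.filter (fun k : Fin n => max r.val s.val < k.val),
        Υ r s k • I k)
    (u : Fin n → Fin n)
    (hu : ∀ s : Fin n, m ≤ s.val → (u s).val < m)
    (hmul3 : ∀ s : Fin n, m ≤ s.val → ∀ r : Fin n, r.val < m →
      I r * I s = if r = u s then I s else 0)
    (hone : ∑ w ∈ Finset.univ.filter (fun w : Fin n => w.val < m), I w = 1)
    -- `e₁ = 1`, `e₂ = Σ a_r I_r`, `e₃ = Σ b_r I_r`, `ζ = x e₁ + y e₂ + z e₃`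
    (a b : Fin n → ℂ) (x y z : ℝ) (e₂ e₃ ζ : A)
    (he₂ : e₂ = ∑ r, a r • I r) (he₃ : e₃ = ∑ r, b r • I r)
    (hζ : ζ = (x : ℂ) • (1 : A) + (y : ℂ) • e₂ + (z : ℂ) • e₃)
    (ξ : Fin n → ℂ) (hξ : ∀ w, ξ w = (x : ℂ) + (y : ℂ) * a w + (z : ℂ) * b w)
    (T : Fin n → ℂ) (hT : ∀ p, T p = (y : ℂ) * a p + (z : ℂ) * b p)
    (B : Fin n → Fin n → ℂ)
    (hB : ∀ r p : Fin n, B r p =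
      ∑ s ∈ Finset.univ.filter (fun s : Fin n => m ≤ s.val ∧ s < p), T s * Υ r s p)
    (t : ℂ) (ht : ∀ w : Fin n, w.val < m → t ≠ ξ w)
    -- the recurrence relations defining the coefficients `A_r`
    (Ac : Fin n → ℂ)
    (hAc1 : ∀ w : Fin n, w.val < m → Ac w = 1 / (t - ξ w))
    (hAc2 : ∀ p : Fin n, m ≤ p.val →
      Ac p = T p / (t - ξ (u p)) ^ 2
        + (1 / (t - ξ (u p)))
            * ∑ r ∈ Finset.univ.filter (fun r : Fin n => m ≤ r.val ∧ r < p),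
                Ac r * B r p) :
    IsUnit (algebraMap ℂ A t - ζ)
      ∧ (algebraMap ℂ A t - ζ) * (∑ r, Ac r • I r) = 1 := by
  set S := univ.filter (fun w : Fin n => w.val < m)
  set R := univ.filter (fun s : Fin n => m ≤ s.val)
  have hS : ∀ w ∈ S, w.val < m := fun w hw => (mem_filter.1 hw).2
  have hR : ∀ s ∈ R, m ≤ s.val := fun s hs => (mem_filter.1 hs).2
  have huR : ∀ s ∈ R, u s ∈ S := fun s hs => mem_filter.2 ⟨mem_univ _, hu s (hR s hs)⟩
  have hd : ∀ w ∈ S, t - ξ w ≠ 0 := fun w hw => sub_ne_zero.2 (ht w (hS w hw))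
  have hSR : ∀ i ∈ S, ∀ s ∈ R, I i * I s = if i = u s then I s else 0 :=
    fun i hi s hs => hmul3 s (hR s hs) i (hS i hi)
  have hsub : algebraMap ℂ A t - ζ = ∑ w ∈ S, (t - ξ w) • I w - ∑ s ∈ R, T s • I s := by
    simp only [hξ, hT]
    exact algebraMap_sub_eq_sum_smul_sub_sum_smul I hone a b x y z t e₂ e₃ ζ he₂ he₃ hζ
  have hsemisimple : (∑ w ∈ S, (t - ξ w) • I w) * ∑ w ∈ S, Ac w • I w = 1 := by
    rw [sum_smul_mul_sum_smul_of_orthogonal S I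
      fun i hi j hj => hidem i j (hS i hi) (hS j hj), ← hone]
    refine sum_congr rfl fun w hw => ?_
    rw [hAc1 w (hS w hw), mul_one_div_cancel (hd w hw), one_smul]
  have hinv : (algebraMap ℂ A t - ζ) * ∑ r, Ac r • I r = 1 := by
    rw [hsub, sum_eq_sum_filter_lt_add_sum_filter_le m]
    refine sub_mul_add_eq_one hsemisimple ?_
    rw [sum_smul_mul_sum_smul_of_mul_eq_ite S I R I u huR hSR,
      sum_smul_mul_sum_smul_of_mul_eq_ite S I R I u huR hSR,
      sum_smul_mul_sum_smul_of_strictly_triangular I Υ hnil, ← sum_sub_distrib,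
      ← sum_sub_distrib]
    refine sum_eq_zero fun k hk => ?_
    simp only [← sub_smul, ← hB]
    rw [mul_sub_mul_sub_eq_zero_of_eq_div_sq_add (hd _ (huR k hk)) (hAc1 _ (hS _ (huR k hk)))
      (hAc2 k (hR k hk)), zero_smul]
  exact ⟨IsUnit.of_mul_eq_one _ hinv, hinv⟩

/-- Lemma 1: for `t ≠ ξ_u` (u = 1,…,m), the element `t e₁ − ζ` is invertible in
`A_n^m` and its inverse is `Σ_r A_r I_r`, where the coefficients `A_r` are given
by the recurrence relations of the paper. -/
theorem resolvent_expansion (n m : ℕ) (hm : m ≤ n) (A : Type*)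
    [CommRing A] [Algebra ℂ A]
    (I : Module.Basis (Fin n) ℂ A)
    (hidem : ∀ r s : Fin n, r.val < m → s.val < m →
      I r * I s = if r = s then I r else 0)
    (Υ : Fin n → Fin n → Fin n → ℂ)
    (hnil : ∀ r s : Fin n, m ≤ r.val → m ≤ s.val →
      I r * I s = ∑ k ∈ Finset.univ.filter (fun k : Fin n => max r.val s.val < k.val),
        Υ r s k • I k)
    (u : Fin n → Fin n)
    (hu : ∀ s : Fin n, m ≤ s.val → (u s).val < m)
    (hmul3 : ∀ s : Fin n, m ≤ s.val → ∀ r : Fin n, r.val < m →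
      I r * I s = if r = u s then I s else 0)
    (hone : ∑ w ∈ Finset.univ.filter (fun w : Fin n => w.val < m), I w = 1)
    -- `e₁ = 1`, `e₂ = Σ a_r I_r`, `e₃ = Σ b_r I_r`, `ζ = x e₁ + y e₂ + z e₃`
    (a b : Fin n → ℂ) (x y z : ℝ) (e₂ e₃ ζ : A)
    (he₂ : e₂ = ∑ r, a r • I r) (he₃ : e₃ = ∑ r, b r • I r)
    (hζ : ζ = (x : ℂ) • (1 : A) + (y : ℂ) • e₂ + (z : ℂ) • e₃)
    (ξ : Fin n → ℂ) (hξ : ∀ w, ξ w = (x : ℂ) + (y : ℂ) * a w + (z : ℂ) * b w)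
    (T : Fin n → ℂ) (hT : ∀ p, T p = (y : ℂ) * a p + (z : ℂ) * b p)
    (B : Fin n → Fin n → ℂ)
    (hB : ∀ r p : Fin n, B r p =
      ∑ s ∈ Finset.univ.filter (fun s : Fin n => m ≤ s.val ∧ s < p), T s * Υ r s p)
    (t : ℂ) (ht : ∀ w : Fin n, w.val < m → t ≠ ξ w)
    -- the recurrence relations defining the coefficients `A_r`
    (Ac : Fin n → ℂ)
    (hAc1 : ∀ w : Fin n, w.val < m → Ac w = 1 / (t - ξ w))
    (hAc2 : ∀ p : Fin n, m ≤ p.val →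
      Ac p = T p / (t - ξ (u p)) ^ 2
        + (1 / (t - ξ (u p)))
            * ∑ r ∈ Finset.univ.filter (fun r : Fin n => m ≤ r.val ∧ r < p),
                Ac r * B r p) :
    IsUnit (algebraMap ℂ A t - ζ)
      ∧ (algebraMap ℂ A t - ζ) * (∑ r, Ac r • I r) = 1 :=
  resolvent_expansion_general n m A I hidem Υ hnil u hu hmul3 hone a b x y z e₂ e₃ ζ he₂ he₃ hζ ξ hξ
    T hT B hB t ht Ac hAc1 hAc2
end

section
/- In A_n^m, suppose p ∈ {m+2,...,n} and r ∈ {m+1,...,p−1} are such that B_{r,p} := Σ_{s=m+1}^{p−1} T_s Υ^s_{r,p} ≠ 0 (for some choice of scalars T_s, equivalently such that Υ^{r}_{k,p} ≠ 0 for some k ∈ {m+1,...,p−1}). Then u_p = u_r, i.e. the unique idempotent acting as identity on I_p coincides with the one acting as identity on I_r. -/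
/-!
Since `I_{u_r} I_r = I_r`, the idempotent `I_{u_r}` fixes `I_r I_s = Σ_k Υ^s_{r,k} I_k`. On the
other hand it keeps exactly the basis vectors `I_k` with `u_k = u_r` and kills the others, so every
`I_k` occurring in `I_r I_s` with a nonzero coefficient has `u_k = u_r`, and `Υ^s_{r,p} ≠ 0`.
-/

theorem Module.Basis.of_mul_sum_eq_self {ι R A : Type*} [CommRing R] [Ring A] [Algebra R A]
    (b : Module.Basis ι R A) {e : A} {P : ι → Prop} [DecidablePred P] {s : Finset ι}
    {c : ι → R} (he : ∀ k ∈ s, e * b k = if P k then b k else 0)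
    (hfix : e * ∑ k ∈ s, c k • b k = ∑ k ∈ s, c k • b k) {k : ι} (hk : k ∈ s)
    (hc : c k ≠ 0) : P k := by
  have hmul : e * ∑ k ∈ s, c k • b k = ∑ k ∈ s, (if P k then c k else 0) • b k := by
    rw [Finset.mul_sum]
    refine Finset.sum_congr rfl fun k hk => ?_
    rw [mul_smul_comm, he k hk]
    split_ifs <;> simp
  have hsum : ∑ k ∈ s, (c k - if P k then c k else 0) • b k = 0 := by
    simp only [sub_smul, Finset.sum_sub_distrib, ← hmul, hfix, sub_self]
  have hck := linearIndependent_iff'.mp b.linearIndependent s _ hsum k hk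
  by_contra hP
  rw [if_neg hP, sub_zero] at hck
  exact hc hck

theorem lemma_two_general (n m : ℕ) (A : Type*)
    [CommRing A] [Algebra ℂ A]
    (I : Module.Basis (Fin n) ℂ A)
    (Υ : Fin n → Fin n → Fin n → ℂ)
    (hnil : ∀ r s : Fin n, m ≤ r.val → m ≤ s.val →
      I r * I s = ∑ k ∈ Finset.univ.filter (fun k : Fin n => max r.val s.val < k.val),
        Υ r s k • I k)
    (u : Fin n → Fin n)
    (hu : ∀ s : Fin n, m ≤ s.val → (u s).val < m)
    (hmul3 : ∀ s : Fin n, m ≤ s.val → ∀ r : Fin n, r.val < m →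
      I r * I s = if r = u s then I s else 0)
    (p r : Fin n) (hr : m ≤ r.val) (hrp : r < p)
    -- `B_{r,p} ≠ 0` for some scalars `T_s`; equivalently some `Υ^s_{r,p} ≠ 0`
    (hB : ∃ s : Fin n, m ≤ s.val ∧ s < p ∧ Υ r s p ≠ 0) :
    u p = u r := by
  obtain ⟨s, hs, hsp, hΥ⟩ := hB
  have hur : (u r).val < m := hu r hr
  have hfix : I (u r) * (I r * I s) = I r * I s := by
    rw [← mul_assoc, hmul3 r hr (u r) hur, if_pos rfl]
  rw [hnil r s hr hs] at hfix
  refine (I.of_mul_sum_eq_self (P := fun k => u r = u k) (fun k hk => ?_) hfix ?_ hΥ).symm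
  · rw [Finset.mem_filter] at hk
    exact hmul3 k (by omega) (u r) hur
  · simp only [Finset.mem_filter, Finset.mem_univ, true_and]
    omega

/-- Lemma 2: if `B_{r,p} ≠ 0` for some choice of scalars `T_s`, i.e. if some
structure constant `Υ^s_{r,p}` with `m ≤ s < p` is nonzero, then `u p = u r`. -/
theorem lemma_two (n m : ℕ) (hm : m ≤ n) (A : Type*)
    [CommRing A] [Algebra ℂ A]
    (I : Module.Basis (Fin n) ℂ A)
    (hidem : ∀ r s : Fin n, r.val < m → s.val < m →
      I r * I s = if r = s then I r else 0)
    (Υ : Fin n → Fin n → Fin n → ℂ)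
    (hnil : ∀ r s : Fin n, m ≤ r.val → m ≤ s.val →
      I r * I s = ∑ k ∈ Finset.univ.filter (fun k : Fin n => max r.val s.val < k.val),
        Υ r s k • I k)
    (u : Fin n → Fin n)
    (hu : ∀ s : Fin n, m ≤ s.val → (u s).val < m)
    (hmul3 : ∀ s : Fin n, m ≤ s.val → ∀ r : Fin n, r.val < m →
      I r * I s = if r = u s then I s else 0)
    (p r : Fin n) (hp : m ≤ p.val) (hr : m ≤ r.val) (hrp : r < p)
    -- `B_{r,p} ≠ 0` for some scalars `T_s`; equivalently some `Υ^s_{r,p} ≠ 0`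
    (hB : ∃ s : Fin n, m ≤ s.val ∧ s < p ∧ Υ r s p ≠ 0) :
    u p = u r :=
  lemma_two_general n m A I Υ hnil u hu hmul3 p r hr hrp hB
end

section
/- With the notation of the resolvent expansion in A_n^m, for every s = m+1,...,n the coefficient A_s of the resolvent (t e_1 − ζ)^{-1} = Σ A_r I_r can be written as A_s = Σ_{k=2}^{s−m+1} Q_{k,s}/(t − ξ_{u_s})^k, where Q_{2,s} = T_s and Q_{k,s} = Σ_{r=m+1}^{s−1} Q_{k−1,r} B_{r,s} for k = 3,...,s−m+1. -/
/-!
Unfolding the recurrence for `A_p` once expresses `A_p` through the `A_r` with `r < p`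
that actually enter it, i.e. those with `B_{r,p} ≠ 0`. For such `r` the idempotent
labels agree, `u_r = u_p`: multiplying `I_r I_s = Σ_k Υ^k_{r,s} I_k` by the idempotent
`I_{u_r}`, which fixes `I_r`, kills every `I_k` with `u_k ≠ u_r`. So all the `A_r` in
the recurrence are expansions in powers of the same `1/(t − ξ_{u_p})`, and by induction
on `p` the extra factor `1/(t − ξ_{u_p})` shifts `Q_{k,r}` into `Q_{k+1,p}`. Since
`Q_{k,r} = 0` for `k > r − m + 2`, all these sums may be taken over one common range.
-/

open Finset

theorem Module.Basis.of_ne_zero_of_mul_sum_smul_eq_self {K A ι : Type*} [CommRing K] [Ring A]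
    [Algebra K A] (I : Module.Basis ι K A) (e : A) (S : Finset ι) (c : ι → K)
    (P : ι → Prop) [DecidablePred P] (he : ∀ k ∈ S, e * I k = if P k then I k else 0)
    (hfix : e * ∑ k ∈ S, c k • I k = ∑ k ∈ S, c k • I k) {k : ι} (hk : k ∈ S)
    (hc : c k ≠ 0) : P k := by
  have hsum : e * ∑ k ∈ S, c k • I k = ∑ k ∈ S, (if P k then c k else 0) • I k := by
    rw [mul_sum]
    refine sum_congr rfl fun j hj => ?_
    rw [mul_smul_comm, he j hj]
    split_ifs <;> simp
  have hdiff : ∑ j ∈ S, (c j - if P j then c j else 0) • I j = 0 := by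
    simp only [sub_smul, sum_sub_distrib, ← hsum, hfix, sub_self]
  have hk0 := linearIndependent_iff'.mp I.linearIndependent S _ hdiff k hk
  by_contra hP
  exact hc (by simpa [hP] using hk0)

section Recurrence

variable {K : Type*} {n m : ℕ} {Q : ℕ → Fin n → K} {B : Fin n → Fin n → K}

theorem Q_eq_zero_of_gt [NonUnitalNonAssocSemiring K]
    (hQrec : ∀ k : ℕ, 3 ≤ k → ∀ s : Fin n,
      Q k s = ∑ r ∈ univ.filter (fun r : Fin n => m ≤ r.val ∧ r < s), Q (k - 1) r * B r s)
    (r : Fin n) : ∀ j, 3 ≤ j → r.val - m + 2 < j → Q j r = 0 := by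
  induction r using WellFoundedLT.induction with
  | _ r ih =>
  intro j hj hrj
  rw [hQrec j hj r]
  refine sum_eq_zero fun w hw => ?_
  simp only [mem_filter, mem_univ, true_and] at hw
  have hwr : w.val < r.val := hw.2
  rw [ih w hw.2 (j - 1) (by omega) (by omega), zero_mul]

theorem sum_Icc_Q_div_pow_eq_of_le [DivisionSemiring K]
    (hQrec : ∀ k : ℕ, 3 ≤ k → ∀ s : Fin n,
      Q k s = ∑ r ∈ univ.filter (fun r : Fin n => m ≤ r.val ∧ r < s), Q (k - 1) r * B r s)
    (r : Fin n) (c : K) {N : ℕ} (hN : r.val - m + 2 ≤ N) :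
    ∑ k ∈ Icc 2 (r.val - m + 2), Q k r / c ^ k = ∑ k ∈ Icc 2 N, Q k r / c ^ k := by
  refine sum_subset (Icc_subset_Icc_right hN) fun k hk hk' => ?_
  simp only [mem_Icc, not_and, not_le] at hk hk'
  rw [Q_eq_zero_of_gt hQrec r k (by omega) (hk' hk.1), zero_div]

theorem sum_Icc_two_eq_add_sum_shift {M : Type*} [AddCommMonoid M] (f : ℕ → M) (N : ℕ) :
    ∑ k ∈ Icc 2 (N + 2), f k = f 2 + ∑ k ∈ Icc 2 (N + 1), f (k + 1) := by
  rw [← insert_Icc_add_one_left_eq_Icc (by omega), sum_insert (by simp),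
    show N + 2 = N + 1 + 1 from rfl, ← map_add_right_Icc, sum_map]
  rfl

theorem eq_sum_Icc_Q_div_pow [Semifield K] (Ac T d : Fin n → K)
    (hd : ∀ r p : Fin n, m ≤ r.val → r < p → B r p ≠ 0 → d r = d p)
    (hAc : ∀ p : Fin n, m ≤ p.val →
      Ac p = T p / d p ^ 2
        + 1 / d p * ∑ r ∈ univ.filter (fun r : Fin n => m ≤ r.val ∧ r < p), Ac r * B r p)
    (hQ2 : ∀ s : Fin n, Q 2 s = T s)
    (hQrec : ∀ k : ℕ, 3 ≤ k → ∀ s : Fin n,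
      Q k s = ∑ r ∈ univ.filter (fun r : Fin n => m ≤ r.val ∧ r < s), Q (k - 1) r * B r s)
    (p : Fin n) (hp : m ≤ p.val) :
    Ac p = ∑ k ∈ Icc 2 (p.val - m + 2), Q k p / d p ^ k := by
  induction p using WellFoundedLT.induction with
  | _ p ih =>
  have hterm : ∀ r ∈ univ.filter (fun r : Fin n => m ≤ r.val ∧ r < p),
      Ac r * B r p = (∑ k ∈ Icc 2 (p.val - m + 1), Q k r / d p ^ k) * B r p := by
    intro r hr
    simp only [mem_filter, mem_univ, true_and] at hr
    have hrp : r.val < p.val := hr.2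
    rcases eq_or_ne (B r p) 0 with hB | hB
    · simp [hB]
    rw [ih r hr.2 hr.1, hd r p hr.1 hr.2 hB,
      sum_Icc_Q_div_pow_eq_of_le (N := p.val - m + 1) hQrec r _ (by omega)]
  have hshift : 1 / d p * ∑ r ∈ univ.filter (fun r : Fin n => m ≤ r.val ∧ r < p),
        (∑ k ∈ Icc 2 (p.val - m + 1), Q k r / d p ^ k) * B r p
      = ∑ k ∈ Icc 2 (p.val - m + 1), Q (k + 1) p / d p ^ (k + 1) := by
    simp_rw [sum_mul, mul_sum]
    rw [sum_comm]
    refine sum_congr rfl fun k hk => ?_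
    rw [hQrec (k + 1) (by simp only [mem_Icc] at hk; omega), Nat.add_sub_cancel, sum_div]
    refine sum_congr rfl fun r _ => ?_
    ring
  rw [hAc p hp, sum_congr rfl hterm, hshift,
    sum_Icc_two_eq_add_sum_shift (fun k => Q k p / d p ^ k), hQ2]

end Recurrence

section CartanBasis

variable {K A : Type*} [CommRing K] [CommRing A] [Algebra K A] {n m : ℕ}
  {Υ : Fin n → Fin n → Fin n → K} {u : Fin n → Fin n}

theorem label_eq_of_structConst_ne_zero (I : Module.Basis (Fin n) K A)
    (hnil : ∀ r s : Fin n, m ≤ r.val → m ≤ s.val →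
      I r * I s = ∑ k ∈ univ.filter (fun k : Fin n => max r.val s.val < k.val),
        Υ r s k • I k)
    (hu : ∀ s : Fin n, m ≤ s.val → (u s).val < m)
    (hmul3 : ∀ s : Fin n, m ≤ s.val → ∀ r : Fin n, r.val < m →
      I r * I s = if r = u s then I s else 0)
    {r s k : Fin n} (hr : m ≤ r.val) (hs : m ≤ s.val) (hk : max r.val s.val < k.val)
    (hΥ : Υ r s k ≠ 0) : u k = u r := by
  have hfix : I (u r) * (I r * I s) = I r * I s := by
    rw [← mul_assoc, hmul3 r hr (u r) (hu r hr), if_pos rfl]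
  rw [hnil r s hr hs] at hfix
  refine (I.of_ne_zero_of_mul_sum_smul_eq_self (I (u r)) _ (Υ r s) (fun w => u r = u w)
    (fun w hw => ?_) hfix (by simpa using hk) hΥ).symm
  simp only [mem_filter, mem_univ, true_and] at hw
  exact hmul3 w (by omega) (u r) (hu r hr)

theorem label_eq_of_B_ne_zero (I : Module.Basis (Fin n) K A)
    (hnil : ∀ r s : Fin n, m ≤ r.val → m ≤ s.val →
      I r * I s = ∑ k ∈ univ.filter (fun k : Fin n => max r.val s.val < k.val),
        Υ r s k • I k)
    (hu : ∀ s : Fin n, m ≤ s.val → (u s).val < m)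
    (hmul3 : ∀ s : Fin n, m ≤ s.val → ∀ r : Fin n, r.val < m →
      I r * I s = if r = u s then I s else 0)
    {T : Fin n → K} {B : Fin n → Fin n → K}
    (hB : ∀ r p : Fin n, B r p =
      ∑ s ∈ univ.filter (fun s : Fin n => m ≤ s.val ∧ s < p), T s * Υ r s p)
    {r p : Fin n} (hr : m ≤ r.val) (hrp : r < p) (hBne : B r p ≠ 0) : u p = u r := by
  rw [hB] at hBne
  obtain ⟨s, hs, hTΥ⟩ := exists_ne_zero_of_sum_ne_zero hBne
  simp only [mem_filter, mem_univ, true_and] at hs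
  exact label_eq_of_structConst_ne_zero I hnil hu hmul3 hr hs.1
    (max_lt_iff.mpr ⟨hrp, hs.2⟩) (right_ne_zero_of_mul hTΥ)

end CartanBasis

/-- With 0-based indices `s.val ∈ {m,…,n−1}`, the upper limit `s − m + 1` of the
paper becomes `s.val − m + 2`. -/
theorem lemma_three_general (n m : ℕ) (A : Type*)
    [CommRing A] [Algebra ℂ A]
    (I : Module.Basis (Fin n) ℂ A)
    (Υ : Fin n → Fin n → Fin n → ℂ)
    (hnil : ∀ r s : Fin n, m ≤ r.val → m ≤ s.val →
      I r * I s = ∑ k ∈ Finset.univ.filter (fun k : Fin n => max r.val s.val < k.val),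
        Υ r s k • I k)
    (u : Fin n → Fin n)
    (hu : ∀ s : Fin n, m ≤ s.val → (u s).val < m)
    (hmul3 : ∀ s : Fin n, m ≤ s.val → ∀ r : Fin n, r.val < m →
      I r * I s = if r = u s then I s else 0)
    (ξ : Fin n → ℂ)
    (T : Fin n → ℂ)
    (B : Fin n → Fin n → ℂ)
    (hB : ∀ r p : Fin n, B r p =
      ∑ s ∈ Finset.univ.filter (fun s : Fin n => m ≤ s.val ∧ s < p), T s * Υ r s p)
    (t : ℂ)
    (Ac : Fin n → ℂ)
    (hAc2 : ∀ p : Fin n, m ≤ p.val →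
      Ac p = T p / (t - ξ (u p)) ^ 2
        + (1 / (t - ξ (u p)))
            * ∑ r ∈ Finset.univ.filter (fun r : Fin n => m ≤ r.val ∧ r < p),
                Ac r * B r p)
    -- the recurrence defining `Q_{k,s}`
    (Q : ℕ → Fin n → ℂ)
    (hQ2 : ∀ s : Fin n, Q 2 s = T s)
    (hQrec : ∀ k : ℕ, 3 ≤ k → ∀ s : Fin n,
      Q k s = ∑ r ∈ Finset.univ.filter (fun r : Fin n => m ≤ r.val ∧ r < s),
        Q (k - 1) r * B r s) :
    ∀ s : Fin n, m ≤ s.val →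
      Ac s = ∑ k ∈ Finset.Icc 2 (s.val - m + 2), Q k s / (t - ξ (u s)) ^ k := by
  intro s hs
  refine eq_sum_Icc_Q_div_pow Ac T (fun p => t - ξ (u p)) (fun r p hr hrp hBne => ?_) hAc2 hQ2
    hQrec s hs
  rw [label_eq_of_B_ne_zero I hnil hu hmul3 hB hr hrp hBne]

/-- Lemma 3: every resolvent coefficient `A_s` (for a nilpotent index `s`) can
be written as `A_s = Σ_{k=2}^{s−m+1} Q_{k,s}/(t − ξ_{u_s})^k`, where the `Q_{k,s}`
are given by the recurrence `Q_{2,s} = T_s`, `Q_{k,s} = Σ_r Q_{k−1,r} B_{r,s}`.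
(With 0-based indices `s.val ∈ {m,…,n−1}`, the upper limit `s − m + 1` of the
paper becomes `s.val − m + 2`.) -/
theorem lemma_three (n m : ℕ) (hm : m ≤ n) (A : Type*)
    [CommRing A] [Algebra ℂ A]
    (I : Module.Basis (Fin n) ℂ A)
    (hidem : ∀ r s : Fin n, r.val < m → s.val < m →
      I r * I s = if r = s then I r else 0)
    (Υ : Fin n → Fin n → Fin n → ℂ)
    (hnil : ∀ r s : Fin n, m ≤ r.val → m ≤ s.val →
      I r * I s = ∑ k ∈ Finset.univ.filter (fun k : Fin n => max r.val s.val < k.val),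
        Υ r s k • I k)
    (u : Fin n → Fin n)
    (hu : ∀ s : Fin n, m ≤ s.val → (u s).val < m)
    (hmul3 : ∀ s : Fin n, m ≤ s.val → ∀ r : Fin n, r.val < m →
      I r * I s = if r = u s then I s else 0)
    (hone : ∑ w ∈ Finset.univ.filter (fun w : Fin n => w.val < m), I w = 1)
    (a b : Fin n → ℂ) (x y z : ℝ)
    (ξ : Fin n → ℂ) (hξ : ∀ w, ξ w = (x : ℂ) + (y : ℂ) * a w + (z : ℂ) * b w)
    (T : Fin n → ℂ) (hT : ∀ p, T p = (y : ℂ) * a p + (z : ℂ) * b p)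
    (B : Fin n → Fin n → ℂ)
    (hB : ∀ r p : Fin n, B r p =
      ∑ s ∈ Finset.univ.filter (fun s : Fin n => m ≤ s.val ∧ s < p), T s * Υ r s p)
    (t : ℂ) (ht : ∀ w : Fin n, w.val < m → t ≠ ξ w)
    (Ac : Fin n → ℂ)
    (hAc1 : ∀ w : Fin n, w.val < m → Ac w = 1 / (t - ξ w))
    (hAc2 : ∀ p : Fin n, m ≤ p.val →
      Ac p = T p / (t - ξ (u p)) ^ 2
        + (1 / (t - ξ (u p)))
            * ∑ r ∈ Finset.univ.filter (fun r : Fin n => m ≤ r.val ∧ r < p),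
                Ac r * B r p)
    -- the recurrence defining `Q_{k,s}`
    (Q : ℕ → Fin n → ℂ)
    (hQ2 : ∀ s : Fin n, Q 2 s = T s)
    (hQrec : ∀ k : ℕ, 3 ≤ k → ∀ s : Fin n,
      Q k s = ∑ r ∈ Finset.univ.filter (fun r : Fin n => m ≤ r.val ∧ r < s),
        Q (k - 1) r * B r s) :
    ∀ s : Fin n, m ≤ s.val →
      Ac s = ∑ k ∈ Finset.Icc 2 (s.val - m + 2), Q k s / (t - ξ (u s)) ^ k :=
  lemma_three_general n m A I Υ hnil u hu hmul3 ξ T B hB t Ac hAc2 Q hQ2 hQrec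
end

section
/- Let ζ = x e_1 + y e_2 + z e_3 in A_n^m with x,y,z ∈ ℝ. The element ζ is not invertible in A_n^m if and only if ξ_u := x + y a_u + z b_u = 0 for some u ∈ {1,...,m}. Consequently the set of (x,y,z) ∈ ℝ³ corresponding to noninvertible elements is the union of the m straight lines L_u given by {x + y Re a_u + z Re b_u = 0, y Im a_u + z Im b_u = 0}. -/
/-!
For `w < m` the coordinate functional `I.coord w` is a character `A →ₐ[ℂ] ℂ`: the `w`-th
coordinate of `I r * I s` is `δ_rw δ_sw`, and `ζ` is sent to `ξ w`. So a unit `ζ` has every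
`ξ w ≠ 0`. Conversely, if every `ξ w ≠ 0`, put `q = ∑_{w<m} (ξ w)⁻¹ I w`; then `ζ q - 1` has no
coordinates below `m`, so it lies in the span of the radical basis vectors. That span is
nilpotent because multiplying by a radical basis vector strictly raises the least index, hence
`ζ q` and `ζ` are units.
-/

open Finset Module

namespace Module.Basis

variable {R M : Type*} [Semiring R] [AddCommMonoid M] [Module R M] {n : ℕ}

def tailSpan (I : Basis (Fin n) R M) (i : ℕ) : Submodule R M :=
  Submodule.span R (I '' {k | i ≤ k.val})

theorem mem_tailSpan_iff (I : Basis (Fin n) R M) {i : ℕ} {p : M} :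
    p ∈ I.tailSpan i ↔ ∀ k : Fin n, k.val < i → I.repr p k = 0 := by
  rw [tailSpan, I.mem_span_image]
  refine ⟨fun h k hk => ?_, fun h k hk => ?_⟩
  · by_contra hne
    exact absurd (h (Finsupp.mem_support_iff.2 hne)) (not_le.2 hk)
  · by_contra hlt
    exact Finsupp.mem_support_iff.1 hk (h k (not_le.1 hlt))

theorem tailSpan_anti (I : Basis (Fin n) R M) {i j : ℕ} (h : i ≤ j) :
    I.tailSpan j ≤ I.tailSpan i :=
  Submodule.span_mono (Set.image_mono fun _ hk => le_trans h hk)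

theorem tailSpan_self_eq_bot (I : Basis (Fin n) R M) : I.tailSpan n = ⊥ := by
  simp [tailSpan, Fin.is_lt]

theorem sum_smul_mem_tailSpan (I : Basis (Fin n) R M) {i : ℕ} {s : Finset (Fin n)}
    (c : Fin n → R) (hs : ∀ k ∈ s, i ≤ k.val) : ∑ k ∈ s, c k • I k ∈ I.tailSpan i :=
  Submodule.sum_mem _ fun k hk =>
    Submodule.smul_mem _ _ (Submodule.subset_span ⟨k, hs k hk, rfl⟩)

end Module.Basis

section

variable {K A : Type*} [Field K] [CommRing A] [Algebra K A] {n m : ℕ}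

/-- The paper's idempotents `I_1, …, I_m` are the `I w` with `w.val < m` (indices start at `0`),
and its radical is `I.tailSpan m`. -/
structure IsCartanBasis (m : ℕ) (I : Basis (Fin n) K A) : Prop where
  mul_of_lt_of_lt : ∀ r s : Fin n, r.val < m → s.val < m → I r * I s = if r = s then I r else 0
  mul_mem_of_lt_of_le : ∀ r s : Fin n, r.val < m → m ≤ s.val → I r * I s ∈ I.tailSpan m
  mul_mem_of_le_of_le :
    ∀ r s : Fin n, m ≤ r.val → m ≤ s.val → I r * I s ∈ I.tailSpan (r.val + 1)
  sum_eq_one : ∑ w ∈ univ.filter (fun w : Fin n => w.val < m), I w = 1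

namespace IsCartanBasis

variable {I : Basis (Fin n) K A}

theorem mul_mem_tailSpan (hI : IsCartanBasis m I) (r : Fin n) {s : Fin n} (hs : m ≤ s.val) :
    I r * I s ∈ I.tailSpan m := by
  rcases lt_or_ge r.val m with hr | hr
  · exact hI.mul_mem_of_lt_of_le r s hr hs
  · exact I.tailSpan_anti (by omega) (hI.mul_mem_of_le_of_le r s hr hs)

theorem tailSpan_mul_le (hI : IsCartanBasis m I) {i : ℕ} (hi : m ≤ i) :
    I.tailSpan i * I.tailSpan m ≤ I.tailSpan (i + 1) := by
  rw [Basis.tailSpan, Basis.tailSpan, Submodule.span_mul_span, Submodule.span_le]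
  rintro _ ⟨_, ⟨r, hr, rfl⟩, _, ⟨s, hs, rfl⟩, rfl⟩
  exact I.tailSpan_anti (by simpa using hr) (hI.mul_mem_of_le_of_le r s (hi.trans hr) hs)

theorem isNilpotent_of_mem_tailSpan (hI : IsCartanBasis m I) {p : A} (hp : p ∈ I.tailSpan m) :
    IsNilpotent p := by
  have hpow : ∀ j : ℕ, p ^ (j + 1) ∈ I.tailSpan (m + j) := by
    intro j
    induction j with
    | zero => simpa using hp
    | succ j ih =>
      rw [pow_succ, ← add_assoc]
      exact hI.tailSpan_mul_le (by omega) (Submodule.mul_mem_mul ih hp)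
  have hbot := I.tailSpan_self_eq_bot ▸ I.tailSpan_anti (by omega : n ≤ m + n) (hpow n)
  exact ⟨n + 1, (Submodule.mem_bot K).1 hbot⟩

theorem coord_mul_basis (hI : IsCartanBasis m I) {w : Fin n} (hw : w.val < m) (r s : Fin n) :
    I.coord w (I r * I s) = I.coord w (I r) * I.coord w (I s) := by
  classical
  have hvanish : ∀ k : Fin n, m ≤ k.val → ∀ r, I.coord w (I r * I k) = 0 := fun k hk r =>
    I.mem_tailSpan_iff.1 (hI.mul_mem_tailSpan r hk) w hw
  have hcoord : ∀ k : Fin n, m ≤ k.val → I.coord w (I k) = 0 := fun k hk => by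
    simp [show k ≠ w by omega]
  rcases lt_or_ge s.val m with hs | hs
  · rcases lt_or_ge r.val m with hr | hr
    · rw [hI.mul_of_lt_of_lt r s hr hs]
      split_ifs with hrs
      · subst hrs
        by_cases hrw : r = w <;> simp [hrw]
      · obtain rfl | hrw := eq_or_ne r w
        · simp [Ne.symm hrs]
        · simp [hrw]
    · rw [mul_comm, hvanish r hr, hcoord r hr, zero_mul]
  · rw [hvanish s hs, hcoord s hs, mul_zero]

theorem coord_mul (hI : IsCartanBasis m I) {w : Fin n} (hw : w.val < m) (p q : A) :
    I.coord w (p * q) = I.coord w p * I.coord w q := by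
  have key : (LinearMap.mul K A).compr₂ (I.coord w) =
      (LinearMap.mul K K).compl₁₂ (I.coord w) (I.coord w) :=
    LinearMap.ext_basis I I fun r s => hI.coord_mul_basis hw r s
  exact LinearMap.congr_fun₂ key p q

theorem coord_one (hI : IsCartanBasis m I) {w : Fin n} (hw : w.val < m) : I.coord w 1 = 1 := by
  classical
  simp [← hI.sum_eq_one, Finsupp.single_apply, hw]

noncomputable def character (hI : IsCartanBasis m I) (w : Fin n) (hw : w.val < m) : A →ₐ[K] K :=
  AlgHom.ofLinearMap (I.coord w) (hI.coord_one hw) (hI.coord_mul hw)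

theorem isUnit_iff (hI : IsCartanBasis m I) {p : A} :
    IsUnit p ↔ ∀ w : Fin n, w.val < m → I.coord w p ≠ 0 := by
  refine ⟨fun hp w hw => (hp.map (hI.character w hw)).ne_zero, fun hp => ?_⟩
  classical
  set q : A := ∑ w, (if w.val < m then (I.coord w p)⁻¹ else 0) • I w
  have hpq : p * q - 1 ∈ I.tailSpan m := I.mem_tailSpan_iff.2 fun w hw => by
    have hq : I.coord w q = (I.coord w p)⁻¹ := by
      rw [Basis.coord_apply, I.repr_sum_self, if_pos hw]
    rw [← Basis.coord_apply, map_sub, hI.coord_mul hw, hI.coord_one hw, hq,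
      mul_inv_cancel₀ (hp w hw), sub_self]
  have hunit : IsUnit (p * q) := by
    simpa using (hI.isNilpotent_of_mem_tailSpan hpq).isUnit_one_add
  exact isUnit_of_mul_isUnit_left hunit

end IsCartanBasis

end

theorem Complex.ofReal_add_mul_add_mul_eq_zero_iff (x y z : ℝ) (a b : ℂ) :
    (x : ℂ) + y * a + z * b = 0 ↔ x + y * a.re + z * b.re = 0 ∧ y * a.im + z * b.im = 0 := by
  simp [Complex.ext_iff]

theorem noninvertible_iff_on_line_general (n m : ℕ) (A : Type*)
    [CommRing A] [Algebra ℂ A]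
    (I : Module.Basis (Fin n) ℂ A)
    (hidem : ∀ r s : Fin n, r.val < m → s.val < m →
      I r * I s = if r = s then I r else 0)
    (Υ : Fin n → Fin n → Fin n → ℂ)
    (hnil : ∀ r s : Fin n, m ≤ r.val → m ≤ s.val →
      I r * I s = ∑ k ∈ Finset.univ.filter (fun k : Fin n => max r.val s.val < k.val),
        Υ r s k • I k)
    (u : Fin n → Fin n)
    (hmul3 : ∀ s : Fin n, m ≤ s.val → ∀ r : Fin n, r.val < m →
      I r * I s = if r = u s then I s else 0)
    (hone : ∑ w ∈ Finset.univ.filter (fun w : Fin n => w.val < m), I w = 1)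
    (a b : Fin n → ℂ) (x y z : ℝ) (e₂ e₃ ζ : A)
    (he₂ : e₂ = ∑ r, a r • I r) (he₃ : e₃ = ∑ r, b r • I r)
    (hζ : ζ = (x : ℂ) • (1 : A) + (y : ℂ) • e₂ + (z : ℂ) • e₃)
    (ξ : Fin n → ℂ) (hξ : ∀ w, ξ w = (x : ℂ) + (y : ℂ) * a w + (z : ℂ) * b w) :
    (¬ IsUnit ζ ↔ ∃ w : Fin n, w.val < m ∧ ξ w = 0)
    ∧ (∀ w : Fin n, w.val < m →
        (ξ w = 0 ↔ (x + y * (a w).re + z * (b w).re = 0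
          ∧ y * (a w).im + z * (b w).im = 0))) := by
  have hI : IsCartanBasis m I :=
    { mul_of_lt_of_lt := hidem
      mul_mem_of_lt_of_le := fun r s hr hs => by
        rw [hmul3 s hs r hr]
        split_ifs
        exacts [Submodule.subset_span ⟨s, hs, rfl⟩, zero_mem _]
      mul_mem_of_le_of_le := fun r s hr hs => by
        rw [hnil r s hr hs]
        exact I.sum_smul_mem_tailSpan _ fun k hk => by rw [Finset.mem_filter] at hk; omega
      sum_eq_one := hone }
  have hcoord : ∀ w : Fin n, w.val < m → I.coord w ζ = ξ w := fun w hw => by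
    rw [hζ, he₂, he₃, hξ]
    simp only [map_add, map_smul, hI.coord_one hw, Basis.coord_apply, I.repr_sum_self,
      smul_eq_mul, mul_one]
  refine ⟨?_, fun w _ => hξ w ▸ Complex.ofReal_add_mul_add_mul_eq_zero_iff x y z (a w) (b w)⟩
  rw [hI.isUnit_iff]
  push Not
  exact exists_congr fun w => and_congr_right fun hw => by rw [hcoord w hw]

/-- `ζ = x e₁ + y e₂ + z e₃` is noninvertible in `A_n^m` iff `ξ_u = 0` for some
`u ≤ m`; moreover `ξ_u = 0` is equivalent to `(x,y,z)` lying on the straight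
line `L_u`. -/
theorem noninvertible_iff_on_line (n m : ℕ) (hm : m ≤ n) (A : Type*)
    [CommRing A] [Algebra ℂ A]
    (I : Module.Basis (Fin n) ℂ A)
    (hidem : ∀ r s : Fin n, r.val < m → s.val < m →
      I r * I s = if r = s then I r else 0)
    (Υ : Fin n → Fin n → Fin n → ℂ)
    (hnil : ∀ r s : Fin n, m ≤ r.val → m ≤ s.val →
      I r * I s = ∑ k ∈ Finset.univ.filter (fun k : Fin n => max r.val s.val < k.val),
        Υ r s k • I k)
    (u : Fin n → Fin n)
    (hu : ∀ s : Fin n, m ≤ s.val → (u s).val < m)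
    (hmul3 : ∀ s : Fin n, m ≤ s.val → ∀ r : Fin n, r.val < m →
      I r * I s = if r = u s then I s else 0)
    (hone : ∑ w ∈ Finset.univ.filter (fun w : Fin n => w.val < m), I w = 1)
    (a b : Fin n → ℂ) (x y z : ℝ) (e₂ e₃ ζ : A)
    (he₂ : e₂ = ∑ r, a r • I r) (he₃ : e₃ = ∑ r, b r • I r)
    (hζ : ζ = (x : ℂ) • (1 : A) + (y : ℂ) • e₂ + (z : ℂ) • e₃)
    (ξ : Fin n → ℂ) (hξ : ∀ w, ξ w = (x : ℂ) + (y : ℂ) * a w + (z : ℂ) * b w) :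
    (¬ IsUnit ζ ↔ ∃ w : Fin n, w.val < m ∧ ξ w = 0)
    ∧ (∀ w : Fin n, w.val < m →
        (ξ w = 0 ↔ (x + y * (a w).re + z * (b w).re = 0
          ∧ y * (a w).im + z * (b w).im = 0))) :=
  noninvertible_iff_on_line_general n m A I hidem Υ hnil u hmul3 hone a b x y z e₂ e₃ ζ he₂ he₃ hζ ξ
    hξ
end

section
/- Let Φ : Ω_ζ → A_n^m be a function whose components U_k : Ω → ℂ in the decomposition Φ(ζ) = Σ_{k=1}^n U_k(x,y,z) I_k are ℝ-differentiable in a domain Ω ⊂ ℝ³. Then Φ is monogenic (Gateaux differentiable with derivative Φ'(ζ) satisfying lim_{ε→0+}(Φ(ζ+εh)−Φ(ζ))/ε = hΦ'(ζ) for all h in the real span E_3 of e_1,e_2,e_3) if and only if the Cauchy–Riemann conditions ∂Φ/∂y = (∂Φ/∂x)·e_2 and ∂Φ/∂z = (∂Φ/∂x)·e_3 hold in Ω_ζ. -/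
open Filter Set

lemma dir_deriv_aux {A : Type*} [NormedCommRing A] [NormedAlgebra ℂ A]
    {φ : ℝ × ℝ × ℝ → A} {p : ℝ × ℝ × ℝ} (h : DifferentiableAt ℝ φ p) (v : ℝ × ℝ × ℝ) :
    Tendsto (fun ε : ℝ => ε⁻¹ • (φ (p + ε • v) - φ p)) (nhdsWithin 0 (Ioi 0))
      (nhds (fderiv ℝ φ p v)) := by
  have hline : HasDerivAt (fun t : ℝ => p + t • v) v 0 := by
    simpa using ((hasDerivAt_id (0:ℝ)).smul_const v).const_add p
  have hg : HasDerivAt (fun t : ℝ => φ (p + t • v)) (fderiv ℝ φ p v) 0 := by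
    have h0 : HasFDerivAt φ (fderiv ℝ φ p) (p + (0:ℝ) • v) := by
      simpa using h.hasFDerivAt
    exact h0.comp_hasDerivAt 0 hline
  have hs := hasDerivAt_iff_tendsto_slope.mp hg
  have hs' := hs.mono_left (nhdsWithin_mono _ (fun x hx => ne_of_gt hx))
  refine hs'.congr fun ε => ?_
  simp [slope_def_module]

/-- A function `Φ(x e₁ + y e₂ + z e₃) = φ(x,y,z)` with ℝ-differentiable
components is monogenic (Gateaux differentiable with
`lim_{ε→0+} (Φ(ζ+εh) − Φ(ζ))/ε = h Φ'(ζ)` for all `h ∈ E₃`) if and only if the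
Cauchy–Riemann conditions `∂Φ/∂y = (∂Φ/∂x)·e₂` and `∂Φ/∂z = (∂Φ/∂x)·e₃` hold. -/
theorem monogenic_iff_cauchy_riemann (A : Type*) [NormedCommRing A] [NormedAlgebra ℂ A]
    (e₂ e₃ : A) (hindep : LinearIndependent ℝ ![(1 : A), e₂, e₃])
    (Ω : Set (ℝ × ℝ × ℝ)) (hΩ : IsOpen Ω)
    (φ : ℝ × ℝ × ℝ → A)
    (hdiff : ∀ p ∈ Ω, DifferentiableAt ℝ φ p) :
    (∀ p ∈ Ω, ∃ D : A, ∀ h₁ h₂ h₃ : ℝ,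
        Tendsto (fun ε : ℝ => ε⁻¹ • (φ (p + ε • (h₁, h₂, h₃)) - φ p))
          (nhdsWithin 0 (Ioi 0))
          (nhds ((h₁ • (1 : A) + h₂ • e₂ + h₃ • e₃) * D)))
    ↔ (∀ p ∈ Ω,
        fderiv ℝ φ p (0, 1, 0) = fderiv ℝ φ p (1, 0, 0) * e₂
        ∧ fderiv ℝ φ p (0, 0, 1) = fderiv ℝ φ p (1, 0, 0) * e₃) := by
  have hbot : (nhdsWithin (0:ℝ) (Ioi 0)).NeBot := by
    exact nhdsGT_neBot 0
  constructor
  · intro H p hp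
    obtain ⟨D, hD⟩ := H p hp
    have key : ∀ h₁ h₂ h₃ : ℝ,
        fderiv ℝ φ p (h₁, h₂, h₃) = (h₁ • (1 : A) + h₂ • e₂ + h₃ • e₃) * D := by
      intro h₁ h₂ h₃
      exact tendsto_nhds_unique (dir_deriv_aux (hdiff p hp) (h₁, h₂, h₃)) (hD h₁ h₂ h₃)
    have h1 : fderiv ℝ φ p (1, 0, 0) = D := by
      have := key 1 0 0; simpa using this
    constructor
    · have := key 0 1 0
      simp only [zero_smul, one_smul, zero_add, add_zero] at this
      rw [this, h1, mul_comm]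
    · have := key 0 0 1
      simp only [zero_smul, one_smul, zero_add, add_zero] at this
      rw [this, h1, mul_comm]
  · intro H p hp
    obtain ⟨hy, hz⟩ := H p hp
    refine ⟨fderiv ℝ φ p (1, 0, 0), fun h₁ h₂ h₃ => ?_⟩
    have heq : fderiv ℝ φ p (h₁, h₂, h₃)
        = (h₁ • (1 : A) + h₂ • e₂ + h₃ • e₃) * fderiv ℝ φ p (1, 0, 0) := by
      have hv : ((h₁, h₂, h₃) : ℝ × ℝ × ℝ)
          = h₁ • (1, 0, 0) + h₂ • (0, 1, 0) + h₃ • (0, 0, 1) := by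
        simp [Prod.ext_iff]
      rw [hv, map_add, map_add, map_smul, map_smul, map_smul, hy, hz]
      simp [add_mul, smul_mul_assoc, mul_comm]
    rw [← heq]
    exact dir_deriv_aux (hdiff p hp) (h₁, h₂, h₃)
end

section
/- Let V : Ω → ℂ be a (continuously differentiable) function on a domain Ω ⊂ ℝ³ that is convex in the direction of the line L_u = {(x,y,z) : x + y Re a_u + z Re b_u = 0, y Im a_u + z Im b_u = 0}, and suppose at least one of a_u, b_u ∈ ℂ \ ℝ. If V satisfies ∂V/∂y = a_u ∂V/∂x and ∂V/∂z = b_u ∂V/∂x in Ω, then there exists a function F holomorphic in D_u = {x + y a_u + z b_u : (x,y,z) ∈ Ω} such that V(x,y,z) = F(x + y a_u + z b_u) for all (x,y,z) ∈ Ω. -/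
/-!
The two equations say that `dV = (∂V/∂x) dξ`, so `V` is constant along every segment on which `ξ`
is constant; convexity of `Ω` in the direction of `L = ker ξ` then makes `V = F ∘ ξ` on `Ω`.
As `a` or `b` is non-real, `ξ` has a continuous `ℝ`-linear right inverse `σ`, and near `ξ p` we have
`F w = V (p + σ (w - ξ p))`, whose real derivative `w ↦ w • ∂V/∂x` is `ℂ`-linear.
-/

open Set

section

variable {E G : Type*} [NormedAddCommGroup E] [NormedSpace ℝ E]
  [NormedAddCommGroup G] [NormedSpace ℝ G]

theorem eq_of_hasFDerivAt_segment_apply_sub_eq_zero {V : E → G} {V' : E → E →L[ℝ] G} {p q : E}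
    (hV : ∀ x ∈ segment ℝ p q, HasFDerivAt V (V' x) x)
    (h0 : ∀ x ∈ segment ℝ p q, V' x (q - p) = 0) : V p = V q := by
  have hline : ∀ t ∈ Icc (0 : ℝ) 1, HasDerivAt (V ∘ AffineMap.lineMap p q) 0 t := fun t ht => by
    have hx : AffineMap.lineMap p q t ∈ segment ℝ p q := by
      rw [segment_eq_image_lineMap]
      exact mem_image_of_mem _ ht
    simpa [h0 _ hx] using (hV _ hx).comp_hasDerivAt t AffineMap.hasDerivAt_lineMap
  have hconst := constant_of_has_deriv_right_zero
    (fun t ht => (hline t ht).continuousAt.continuousWithinAt)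
    (fun t ht => (hline t (Ico_subset_Icc_self ht)).hasDerivWithinAt) 1 (right_mem_Icc.2 zero_le_one)
  simpa using hconst.symm

end

section

variable {E : Type*} [NormedAddCommGroup E] [NormedSpace ℝ E]
  {ℓ : E →L[ℝ] ℂ} {V : E → ℂ} {Ω : Set E}

theorem eq_of_apply_eq_of_hasFDerivAt_smulRight
    (hconv : ∀ p ∈ Ω, ∀ q ∈ Ω, ℓ p = ℓ q → segment ℝ p q ⊆ Ω)
    (hV : ∀ p ∈ Ω, ∃ c, HasFDerivAt V (ℓ.smulRight c) p)
    {p q : E} (hp : p ∈ Ω) (hq : q ∈ Ω) (hpq : ℓ p = ℓ q) : V p = V q := by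
  choose! c hc using hV
  refine eq_of_hasFDerivAt_segment_apply_sub_eq_zero
    (fun x hx => hc x (hconv p hp q hq hpq hx)) fun x _ => ?_
  simp [hpq]

theorem hasDerivAt_comp_add_rightInverse {σ : ℂ →L[ℝ] E} (hσ : ∀ w, ℓ (σ w) = w)
    {p : E} {c : ℂ} (hV : HasFDerivAt V (ℓ.smulRight c) p) (w₀ : ℂ) :
    HasDerivAt (fun w => V (p + σ (w - w₀))) c w₀ := by
  have hγ : HasFDerivAt (fun w => p + σ (w - w₀)) σ w₀ :=
    (σ.hasFDerivAt.comp w₀ ((hasFDerivAt_id w₀).sub_const w₀)).const_add p |>.congr_fderiv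
      (by ext; simp)
  have hcomp := (show HasFDerivAt V (ℓ.smulRight c) (p + σ (w₀ - w₀)) by simpa using hV).comp w₀ hγ
  refine hasFDerivAt_of_restrictScalars (f' := (1 : ℂ →L[ℂ] ℂ).smulRight c) ℝ hcomp ?_
  ext w
  simp [hσ]

theorem exists_differentiableOn_eq_comp_of_hasFDerivAt_smulRight (hΩ : IsOpen Ω)
    {σ : ℂ →L[ℝ] E} (hσ : ∀ w, ℓ (σ w) = w)
    (hconv : ∀ p ∈ Ω, ∀ q ∈ Ω, ℓ p = ℓ q → segment ℝ p q ⊆ Ω)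
    (hV : ∀ p ∈ Ω, ∃ c, HasFDerivAt V (ℓ.smulRight c) p) :
    ∃ F : ℂ → ℂ, DifferentiableOn ℂ F (ℓ '' Ω) ∧ ∀ p ∈ Ω, V p = F (ℓ p) := by
  have hfiber : ∀ {p q}, p ∈ Ω → q ∈ Ω → ℓ p = ℓ q → V p = V q :=
    eq_of_apply_eq_of_hasFDerivAt_smulRight hconv hV
  refine ⟨V ∘ Function.invFunOn ℓ Ω, ?_, fun p hp => hfiber hp
    (Function.invFunOn_apply_mem hp) (Function.invFunOn_apply_eq hp).symm⟩
  rintro _ ⟨p, hp, rfl⟩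
  obtain ⟨c, hc⟩ := hV p hp
  have hγ : Continuous fun w => p + σ (w - ℓ p) := by fun_prop
  have hnhds : (fun w => p + σ (w - ℓ p)) ⁻¹' Ω ∈ nhds (ℓ p) :=
    (hΩ.preimage hγ).mem_nhds (by simpa using hp)
  refine ((hasDerivAt_comp_add_rightInverse hσ hc (ℓ p)).congr_of_eventuallyEq ?_)
    |>.differentiableAt.differentiableWithinAt
  filter_upwards [hnhds] with w hw
  have hw' : ∃ x ∈ Ω, ℓ x = w := ⟨_, hw, by simp [hσ]⟩
  exact hfiber (Function.invFunOn_mem hw') hw (by simp [Function.invFunOn_eq hw', hσ])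

end

section

noncomputable def xiCLM (a b : ℂ) : ℝ × ℝ × ℝ →L[ℝ] ℂ :=
  (ContinuousLinearMap.fst ℝ ℝ (ℝ × ℝ)).smulRight 1
    + ((ContinuousLinearMap.fst ℝ ℝ ℝ).comp (ContinuousLinearMap.snd ℝ ℝ (ℝ × ℝ))).smulRight a
    + ((ContinuousLinearMap.snd ℝ ℝ ℝ).comp (ContinuousLinearMap.snd ℝ ℝ (ℝ × ℝ))).smulRight b

variable (a b : ℂ)

@[simp]
theorem xiCLM_apply (p : ℝ × ℝ × ℝ) :
    xiCLM a b p = (p.1 : ℂ) + (p.2.1 : ℂ) * a + (p.2.2 : ℂ) * b := by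
  simp [xiCLM, Complex.real_smul]

theorem xiCLM_eq_zero_iff (p : ℝ × ℝ × ℝ) : xiCLM a b p = 0 ↔
    p.1 + p.2.1 * a.re + p.2.2 * b.re = 0 ∧ p.2.1 * a.im + p.2.2 * b.im = 0 := by
  simp [Complex.ext_iff]

theorem eq_smulRight_xiCLM {f : ℝ × ℝ × ℝ →L[ℝ] ℂ} (ha : f (0, 1, 0) = a * f (1, 0, 0))
    (hb : f (0, 0, 1) = b * f (1, 0, 0)) : f = (xiCLM a b).smulRight (f (1, 0, 0)) := by
  refine ContinuousLinearMap.ext fun v => ?_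
  have hv : v = v.1 • ((1 : ℝ), (0 : ℝ), (0 : ℝ)) + v.2.1 • ((0 : ℝ), (1 : ℝ), (0 : ℝ))
      + v.2.2 • ((0 : ℝ), (0 : ℝ), (1 : ℝ)) := by
    simp
  conv_lhs => rw [hv]
  simp only [map_add, map_smul, ha, hb, ContinuousLinearMap.smulRight_apply, xiCLM_apply,
    Complex.real_smul, smul_eq_mul]
  ring

theorem Complex.ofReal_re_sub_add_ofReal_mul {a : ℂ} (ha : a.im ≠ 0) (w : ℂ) :
    ((w.re - a.re / a.im * w.im : ℝ) : ℂ) + ((w.im / a.im : ℝ) : ℂ) * a = w := by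
  apply Complex.ext
  · simp
    field_simp
    ring
  · simp
    field_simp

theorem exists_rightInverse_xiCLM (hab : a.im ≠ 0 ∨ b.im ≠ 0) :
    ∃ σ : ℂ →L[ℝ] ℝ × ℝ × ℝ, ∀ w, xiCLM a b (σ w) = w := by
  rcases hab with ha | hb
  · refine ⟨(Complex.reCLM - (a.re / a.im) • Complex.imCLM).prod
      ((a.im⁻¹ • Complex.imCLM).prod 0), fun w => ?_⟩
    simpa [div_eq_inv_mul] using Complex.ofReal_re_sub_add_ofReal_mul ha w
  · refine ⟨(Complex.reCLM - (b.re / b.im) • Complex.imCLM).prod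
      ((0 : ℂ →L[ℝ] ℝ).prod (b.im⁻¹ • Complex.imCLM)), fun w => ?_⟩
    simpa [div_eq_inv_mul] using Complex.ofReal_re_sub_add_ofReal_mul hb w

end

theorem lemma_six_general (a b : ℂ) (hab : a.im ≠ 0 ∨ b.im ≠ 0)
    (Ω : Set (ℝ × ℝ × ℝ)) (hΩo : IsOpen Ω)
    (L : Set (ℝ × ℝ × ℝ))
    (hL : L = {p : ℝ × ℝ × ℝ |
      p.1 + p.2.1 * a.re + p.2.2 * b.re = 0 ∧ p.2.1 * a.im + p.2.2 * b.im = 0})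
    -- `Ω` is convex in the direction of `L`
    (hconv : ∀ p ∈ Ω, ∀ q ∈ Ω, q - p ∈ L → segment ℝ p q ⊆ Ω)
    (ξ : ℝ × ℝ × ℝ → ℂ)
    (hξ : ∀ p : ℝ × ℝ × ℝ, ξ p = (p.1 : ℂ) + (p.2.1 : ℂ) * a + (p.2.2 : ℂ) * b)
    (V : ℝ × ℝ × ℝ → ℂ) (hV : ContDiffOn ℝ 1 V Ω)
    (hCR1 : ∀ p ∈ Ω, fderiv ℝ V p (0, 1, 0) = a * fderiv ℝ V p (1, 0, 0))
    (hCR2 : ∀ p ∈ Ω, fderiv ℝ V p (0, 0, 1) = b * fderiv ℝ V p (1, 0, 0)) :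
    ∃ F : ℂ → ℂ, DifferentiableOn ℂ F (ξ '' Ω) ∧ ∀ p ∈ Ω, V p = F (ξ p) := by
  obtain rfl : ξ = xiCLM a b := funext fun p => by simp [hξ]
  obtain ⟨σ, hσ⟩ := exists_rightInverse_xiCLM a b hab
  refine exists_differentiableOn_eq_comp_of_hasFDerivAt_smulRight hΩo hσ
    (fun p hp q hq hpq => hconv p hp q hq ?_) fun p hp => ⟨fderiv ℝ V p (1, 0, 0), ?_⟩
  · rw [hL]
    exact (xiCLM_eq_zero_iff a b _).1 (by rw [map_sub, hpq, sub_self])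
  · rw [← eq_smulRight_xiCLM a b (hCR1 p hp) (hCR2 p hp)]
    exact ((hV.contDiffAt (hΩo.mem_nhds hp)).differentiableAt one_ne_zero).hasFDerivAt

/-- Lemma 6: a continuously differentiable `V : Ω → ℂ`, on a domain `Ω ⊆ ℝ³`
convex in the direction of the line `L_u`, satisfying
`∂V/∂y = a ∂V/∂x` and `∂V/∂z = b ∂V/∂x` (with `a ∉ ℝ` or `b ∉ ℝ`), is a
holomorphic function of the variable `ξ = x + y a + z b`. -/
theorem lemma_six (a b : ℂ) (hab : a.im ≠ 0 ∨ b.im ≠ 0)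
    (Ω : Set (ℝ × ℝ × ℝ)) (hΩo : IsOpen Ω) (hΩc : IsConnected Ω)
    (L : Set (ℝ × ℝ × ℝ))
    (hL : L = {p : ℝ × ℝ × ℝ |
      p.1 + p.2.1 * a.re + p.2.2 * b.re = 0 ∧ p.2.1 * a.im + p.2.2 * b.im = 0})
    -- `Ω` is convex in the direction of `L`
    (hconv : ∀ p ∈ Ω, ∀ q ∈ Ω, q - p ∈ L → segment ℝ p q ⊆ Ω)
    (ξ : ℝ × ℝ × ℝ → ℂ)
    (hξ : ∀ p : ℝ × ℝ × ℝ, ξ p = (p.1 : ℂ) + (p.2.1 : ℂ) * a + (p.2.2 : ℂ) * b)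
    (V : ℝ × ℝ × ℝ → ℂ) (hV : ContDiffOn ℝ 1 V Ω)
    (hCR1 : ∀ p ∈ Ω, fderiv ℝ V p (0, 1, 0) = a * fderiv ℝ V p (1, 0, 0))
    (hCR2 : ∀ p ∈ Ω, fderiv ℝ V p (0, 0, 1) = b * fderiv ℝ V p (1, 0, 0)) :
    ∃ F : ℂ → ℂ, DifferentiableOn ℂ F (ξ '' Ω) ∧ ∀ p ∈ Ω, V p = F (ξ p) :=
  lemma_six_general a b hab Ω hΩo L hL hconv ξ hξ V hV hCR1 hCR2
end

section
/- Let A_n^m have trivial multiplication on the radical (I_s I_p = 0 for s,p > m) and let Ω ⊂ ℝ³ be a domain with a_u ∉ ℝ or b_u ∉ ℝ for each u ≤ m. Then for any functions F_u holomorphic in D_u (u = 1,...,m) and G_s holomorphic in D_{u_s} (s = m+1,...,n), the function Φ(ζ) = Σ_{u=1}^m F_u(ξ_u) I_u + Σ_{s=m+1}^n G_s(ξ_{u_s}) I_s + Σ_{s=m+1}^n T_s F'_{u_s}(ξ_{u_s}) I_s, where ξ_u = x + y a_u + z b_u and T_s = y a_s + z b_s, is monogenic in Ω_ζ, i.e.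 continuous and Gateaux differentiable with hΦ'(ζ) = lim_{ε→0+}(Φ(ζ+εh)−Φ(ζ))/ε for all h ∈ E_3. -/
open Filter Set Finset Topology

/-!
In the Cartan basis, multiplication is computed coordinatewise: idempotent coordinates multiply,
and since the radical squares to zero, the `I_s`-coordinate of a product is
`c_{u_s} d_s + c_s d_{u_s}`. Differentiating `Φ` along `h = x e₁ + y e₂ + z e₃` term by term gives
idempotent coordinates `ξ_u(h) F_u'` and radical coordinates
`ξ_{u_s}(h) (G_s' + T_s F_{u_s}'') + T_s(h) F_{u_s}'`. Since `h` itself has coordinates `ξ_u(h)` and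
`T_s(h)`, this is `h Φ'(ζ)` with `Φ'(ζ) = Σ F_u' I_u + Σ (G_s' + T_s F_{u_s}'') I_s`. The domains
`D_u` are open because `ξ_u` is a surjective real-linear map when `a_u` or `b_u` is not real,
so `F_u'` is again holomorphic.
-/

section Cartan

variable {ι R A : Type*} [CommSemiring R] [CommSemiring A] [Algebra R A]

/-- `W` indexes the idempotents `I_u` and `S` the radical vectors `I_s`. -/
def cartanElt (I : ι → A) (W S : Finset ι) (c₁ c₂ : ι → R) : A :=
  ∑ w ∈ W, c₁ w • I w + ∑ s ∈ S, c₂ s • I s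

variable {I : ι → A} {W S : Finset ι}

lemma cartanElt_add (c₁ c₂ d₁ d₂ : ι → R) :
    cartanElt I W S (c₁ + d₁) (c₂ + d₂) = cartanElt I W S c₁ c₂ + cartanElt I W S d₁ d₂ := by
  simp only [cartanElt, Pi.add_apply, add_smul, sum_add_distrib]
  abel

lemma cartanElt_smul {K : Type*} [Monoid K] [MulAction K R] [DistribMulAction K A]
    [IsScalarTower K R A] (r : K) (c₁ c₂ : ι → R) :
    cartanElt I W S (r • c₁) (r • c₂) = r • cartanElt I W S c₁ c₂ := by
  simp only [cartanElt, Pi.smul_apply, smul_assoc, smul_add, smul_sum]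

lemma cartanElt_one_zero (hone : ∑ w ∈ W, I w = 1) : cartanElt I W S (1 : ι → R) 0 = 1 := by
  simp [cartanElt, hone]

lemma sum_smul_mul_sum_smul_of_mul_eq_zero (hrad : ∀ s ∈ S, ∀ p ∈ S, I s * I p = 0)
    (c d : ι → R) : (∑ s ∈ S, c s • I s) * (∑ s ∈ S, d s • I s) = 0 := by
  rw [sum_mul_sum]
  exact sum_eq_zero fun s hs => sum_eq_zero fun p hp => by
    rw [smul_mul_smul_comm, hrad s hs p hp, smul_zero]

variable [DecidableEq ι]

lemma sum_smul_mul_sum_smul_of_orthogonal_s16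
    (hidem : ∀ r ∈ W, ∀ s ∈ W, I r * I s = if r = s then I r else 0) (c d : ι → R) :
    (∑ w ∈ W, c w • I w) * (∑ w ∈ W, d w • I w) = ∑ w ∈ W, (c w * d w) • I w := by
  rw [sum_mul_sum]
  refine sum_congr rfl fun r hr => ?_
  simp_rw [smul_mul_smul_comm]
  rw [sum_congr rfl fun s hs => by rw [hidem r hr s hs]]
  simp [hr]

lemma sum_smul_mul_sum_smul_of_mul_eq_ite_s16 {u : ι → ι} (hu : ∀ s ∈ S, u s ∈ W)
    (hmul : ∀ s ∈ S, ∀ r ∈ W, I r * I s = if r = u s then I s else 0) (c d : ι → R) :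
    (∑ w ∈ W, c w • I w) * (∑ s ∈ S, d s • I s) = ∑ s ∈ S, (c (u s) * d s) • I s := by
  rw [sum_mul_sum, sum_comm]
  refine sum_congr rfl fun s hs => ?_
  simp_rw [smul_mul_smul_comm]
  rw [sum_congr rfl fun r hr => by rw [hmul s hs r hr]]
  simp [hu s hs]

lemma cartanElt_mul {u : ι → ι} (hidem : ∀ r ∈ W, ∀ s ∈ W, I r * I s = if r = s then I r else 0)
    (hu : ∀ s ∈ S, u s ∈ W) (hmul : ∀ s ∈ S, ∀ r ∈ W, I r * I s = if r = u s then I s else 0)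
    (hrad : ∀ s ∈ S, ∀ p ∈ S, I s * I p = 0) (c₁ c₂ d₁ d₂ : ι → R) :
    cartanElt I W S c₁ c₂ * cartanElt I W S d₁ d₂ =
      cartanElt I W S (c₁ * d₁) (fun s => c₁ (u s) * d₂ s + c₂ s * d₁ (u s)) := by
  simp only [cartanElt, add_mul, mul_add, sum_smul_mul_sum_smul_of_orthogonal_s16 hidem,
    sum_smul_mul_sum_smul_of_mul_eq_ite_s16 hu hmul, sum_smul_mul_sum_smul_of_mul_eq_zero hrad]
  rw [mul_comm (∑ s ∈ S, c₂ s • I s), sum_smul_mul_sum_smul_of_mul_eq_ite_s16 hu hmul, add_zero,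
    add_assoc, ← sum_add_distrib]
  simp only [Pi.mul_apply, ← add_smul, mul_comm (d₁ _), add_comm (c₂ _ * _)]

lemma sum_smul_eq_cartanElt [Fintype ι] (hS : S = Wᶜ) (c : ι → R) :
    ∑ r, c r • I r = cartanElt I W S c c := by
  rw [cartanElt, hS, sum_add_sum_compl]

end Cartan

noncomputable def linComb3 (c₁ c₂ c₃ : ℂ) : ℝ × ℝ × ℝ →L[ℝ] ℂ :=
  (ContinuousLinearMap.fst ℝ ℝ (ℝ × ℝ)).smulRight c₁
    + ((ContinuousLinearMap.fst ℝ ℝ ℝ).comp (ContinuousLinearMap.snd ℝ ℝ (ℝ × ℝ))).smulRight c₂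
    + ((ContinuousLinearMap.snd ℝ ℝ ℝ).comp (ContinuousLinearMap.snd ℝ ℝ (ℝ × ℝ))).smulRight c₃

@[simp]
lemma linComb3_apply (c₁ c₂ c₃ : ℂ) (p : ℝ × ℝ × ℝ) :
    linComb3 c₁ c₂ c₃ p = p.1 * c₁ + p.2.1 * c₂ + p.2.2 * c₃ := by
  simp [linComb3, Complex.real_smul]

lemma exists_ofReal_add_ofReal_mul_eq {a : ℂ} (ha : a.im ≠ 0) (c : ℂ) :
    ∃ x y : ℝ, (x + y * a : ℂ) = c := by
  refine ⟨c.re - c.im / a.im * a.re, c.im / a.im, ?_⟩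
  apply Complex.ext <;> simp [ha]

lemma linComb3_one_surjective {a b : ℂ} (hab : a.im ≠ 0 ∨ b.im ≠ 0) :
    Function.Surjective (linComb3 1 a b) := by
  intro c
  rcases hab with ha | hb
  · obtain ⟨x, y, hxy⟩ := exists_ofReal_add_ofReal_mul_eq ha c
    exact ⟨(x, y, 0), by simpa using hxy⟩
  · obtain ⟨x, z, hxz⟩ := exists_ofReal_add_ofReal_mul_eq hb c
    exact ⟨(x, 0, z), by simpa using hxz⟩

lemma isOpenMap_linComb3_one {a b : ℂ} (hab : a.im ≠ 0 ∨ b.im ≠ 0) :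
    IsOpenMap (linComb3 1 a b) :=
  (linComb3 1 a b).isOpenMap (linComb3_one_surjective hab)

lemma cartanElt_linComb3 {ι A : Type*} [CommRing A] [Algebra ℂ A] (I : ι → A)
    (W S : Finset ι) (a b : ι → ℂ) (v : ℝ × ℝ × ℝ) :
    cartanElt I W S (fun w => linComb3 1 (a w) (b w) v) (fun s => linComb3 0 (a s) (b s) v) =
      v.1 • cartanElt I W S (1 : ι → ℂ) 0 + v.2.1 • cartanElt I W S a a
        + v.2.2 • cartanElt I W S b b := by
  simp only [← cartanElt_smul, ← cartanElt_add]
  rfl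

section Calculus

variable {ι E A : Type*} [NormedAddCommGroup E] [NormedSpace ℝ E]
  [NormedCommRing A] [NormedAlgebra ℂ A]

lemma ContinuousLinearMap.hasDerivAt_comp_line {F : Type*} [NormedAddCommGroup F]
    [NormedSpace ℝ F] (L : E →L[ℝ] F) (p v : E) :
    HasDerivAt (fun t : ℝ => L (p + t • v)) (L v) 0 := by
  simpa using ((hasDerivAt_id (0 : ℝ)).smul_const (L v)).const_add (L p)

lemma hasDerivAt_comp_clm_line (L : E →L[ℝ] ℂ) {f : ℂ → ℂ} {p : E}
    (hf : DifferentiableAt ℂ f (L p)) (v : E) :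
    HasDerivAt (fun t : ℝ => f (L (p + t • v))) (deriv f (L p) * L v) 0 :=
  hf.hasDerivAt.comp_of_eq 0 (L.hasDerivAt_comp_line p v) (by simp)

variable {I : ι → A} {W S : Finset ι}

lemma HasDerivAt.cartanElt {c₁ c₂ : ι → ℝ → ℂ} {c₁' c₂' : ι → ℂ} {t : ℝ}
    (h₁ : ∀ w ∈ W, HasDerivAt (c₁ w) (c₁' w) t) (h₂ : ∀ s ∈ S, HasDerivAt (c₂ s) (c₂' s) t) :
    HasDerivAt (fun t => cartanElt I W S (c₁ · t) (c₂ · t)) (cartanElt I W S c₁' c₂') t :=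
  (HasDerivAt.fun_sum fun w hw => (h₁ w hw).smul_const (I w)).add
    (HasDerivAt.fun_sum fun s hs => (h₂ s hs).smul_const (I s))

lemma ContinuousOn.cartanElt {X : Type*} [TopologicalSpace X] {c₁ c₂ : ι → X → ℂ} {Ω : Set X}
    (h₁ : ∀ w ∈ W, ContinuousOn (c₁ w) Ω) (h₂ : ∀ s ∈ S, ContinuousOn (c₂ s) Ω) :
    ContinuousOn (fun p => cartanElt I W S (c₁ · p) (c₂ · p)) Ω :=
  (continuousOn_finsetSum _ fun w hw => (h₁ w hw).smul continuousOn_const).add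
    (continuousOn_finsetSum _ fun s hs => (h₂ s hs).smul continuousOn_const)

variable (I W S) (u : ι → ι) (L M : ι → E →L[ℝ] ℂ) (F G : ι → ℂ → ℂ)

/-- The paper's `Φ`, with `ξ_u = L u` and `T_s = M s`. -/
noncomputable def explicitFormula (p : E) : A :=
  cartanElt I W S (fun w => F w (L w p))
    (fun s => G s (L (u s) p) + M s p * deriv (F (u s)) (L (u s) p))

variable {I W S u L M F G}

lemma continuousOn_explicitFormula {Ω : Set E} (hF : ∀ w ∈ W, ContinuousOn (F w) (L w '' Ω))
    (hF' : ∀ s ∈ S, ContinuousOn (deriv (F (u s))) (L (u s) '' Ω))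
    (hG : ∀ s ∈ S, ContinuousOn (G s) (L (u s) '' Ω)) :
    ContinuousOn (explicitFormula I W S u L M F G) Ω := by
  have hcomp {f : ℂ → ℂ} {w : ι} (hf : ContinuousOn f (L w '' Ω)) :
      ContinuousOn (fun p => f (L w p)) Ω :=
    hf.comp (L w).continuous.continuousOn (mapsTo_image _ _)
  exact ContinuousOn.cartanElt (fun w hw => hcomp (hF w hw)) fun s hs =>
    (hcomp (hG s hs)).add ((M s).continuous.continuousOn.mul (hcomp (hF' s hs)))

lemma hasDerivAt_explicitFormula_line {p : E}
    (hF : ∀ w ∈ W, DifferentiableAt ℂ (F w) (L w p))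
    (hF' : ∀ s ∈ S, DifferentiableAt ℂ (deriv (F (u s))) (L (u s) p))
    (hG : ∀ s ∈ S, DifferentiableAt ℂ (G s) (L (u s) p)) (v : E) :
    HasDerivAt (fun t : ℝ => explicitFormula I W S u L M F G (p + t • v))
      (cartanElt I W S (fun w => deriv (F w) (L w p) * L w v)
        (fun s => deriv (G s) (L (u s) p) * L (u s) v
          + (M s v * deriv (F (u s)) (L (u s) p)
            + M s p * (deriv (deriv (F (u s))) (L (u s) p) * L (u s) v)))) 0 := by
  refine HasDerivAt.cartanElt (fun w hw => hasDerivAt_comp_clm_line _ (hF w hw) v)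
    fun s hs => (hasDerivAt_comp_clm_line _ (hG s hs) v).add ?_
  simpa using
    ((M s).hasDerivAt_comp_line p v).fun_mul (hasDerivAt_comp_clm_line _ (hF' s hs) v)

theorem explicitFormula_monogenic [DecidableEq ι] {Ω : Set E}
    (hidem : ∀ r ∈ W, ∀ s ∈ W, I r * I s = if r = s then I r else 0) (hu : ∀ s ∈ S, u s ∈ W)
    (hmul : ∀ s ∈ S, ∀ r ∈ W, I r * I s = if r = u s then I s else 0)
    (hrad : ∀ s ∈ S, ∀ p ∈ S, I s * I p = 0) (hopen : ∀ w ∈ W, IsOpen (L w '' Ω))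
    (hF : ∀ w ∈ W, DifferentiableOn ℂ (F w) (L w '' Ω))
    (hG : ∀ s ∈ S, DifferentiableOn ℂ (G s) (L (u s) '' Ω)) :
    ContinuousOn (explicitFormula I W S u L M F G) Ω ∧ ∀ p ∈ Ω, ∃ D : A, ∀ v : E,
      Tendsto (fun ε : ℝ => ε⁻¹ • (explicitFormula I W S u L M F G (p + ε • v)
          - explicitFormula I W S u L M F G p)) (𝓝[>] 0)
        (𝓝 (cartanElt I W S (L · v) (M · v) * D)) := by
  have hF' : ∀ s ∈ S, DifferentiableOn ℂ (deriv (F (u s))) (L (u s) '' Ω) := fun s hs =>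
    (hF _ (hu s hs)).deriv (hopen _ (hu s hs))
  refine ⟨continuousOn_explicitFormula (fun w hw => (hF w hw).continuousOn)
    (fun s hs => (hF' s hs).continuousOn) (fun s hs => (hG s hs).continuousOn), fun p hp =>
    ⟨cartanElt I W S (fun w => deriv (F w) (L w p))
      (fun s => deriv (G s) (L (u s) p) + M s p * deriv (deriv (F (u s))) (L (u s) p)),
    fun v => ?_⟩⟩
  have hdiff {f : ℂ → ℂ} {w : ι} (hw : w ∈ W) (hf : DifferentiableOn ℂ f (L w '' Ω)) :
      DifferentiableAt ℂ f (L w p) :=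
    hf.differentiableAt ((hopen w hw).mem_nhds ⟨p, hp, rfl⟩)
  have hline := (hasDerivAt_explicitFormula_line (I := I) (M := M)
    (fun w hw => hdiff hw (hF w hw)) (fun s hs => hdiff (hu s hs) (hF' s hs))
    (fun s hs => hdiff (hu s hs) (hG s hs)) v).tendsto_slope_zero_right
  simp only [zero_add, zero_smul, add_zero] at hline
  convert hline using 2
  rw [cartanElt_mul hidem hu hmul hrad]
  congr 1
  · ext w
    exact mul_comm _ _
  · ext s
    ring

end Calculus

theorem explicit_formula_is_monogenic_general (n m : ℕ) (A : Type*)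
    [NormedCommRing A] [NormedAlgebra ℂ A]
    (I : Module.Basis (Fin n) ℂ A)
    (hidem : ∀ r s : Fin n, r.val < m → s.val < m →
      I r * I s = if r = s then I r else 0)
    (u : Fin n → Fin n)
    (hu : ∀ s : Fin n, m ≤ s.val → (u s).val < m)
    (hmul3 : ∀ s : Fin n, m ≤ s.val → ∀ r : Fin n, r.val < m →
      I r * I s = if r = u s then I s else 0)
    -- trivial multiplication on the radical
    (hrad : ∀ s p : Fin n, m ≤ s.val → m ≤ p.val → I s * I p = 0)
    (hone : ∑ w ∈ Finset.univ.filter (fun w : Fin n => w.val < m), I w = 1)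
    (a b : Fin n → ℂ) (e₂ e₃ : A)
    (he₂ : e₂ = ∑ r, a r • I r) (he₃ : e₃ = ∑ r, b r • I r)
    (hab : ∀ w : Fin n, w.val < m → (a w).im ≠ 0 ∨ (b w).im ≠ 0)
    (Ω : Set (ℝ × ℝ × ℝ)) (hΩ : IsOpen Ω)
    (ξ : Fin n → (ℝ × ℝ × ℝ) → ℂ)
    (hξ : ∀ w p, ξ w p = (p.1 : ℂ) + (p.2.1 : ℂ) * a w + (p.2.2 : ℂ) * b w)
    (T : Fin n → (ℝ × ℝ × ℝ) → ℂ)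
    (hT : ∀ s p, T s p = (p.2.1 : ℂ) * a s + (p.2.2 : ℂ) * b s)
    (F G : Fin n → ℂ → ℂ)
    (hF : ∀ w : Fin n, w.val < m → DifferentiableOn ℂ (F w) (ξ w '' Ω))
    (hG : ∀ s : Fin n, m ≤ s.val → DifferentiableOn ℂ (G s) (ξ (u s) '' Ω))
    (φ : ℝ × ℝ × ℝ → A)
    (hφ : ∀ p, φ p =
      (∑ w ∈ Finset.univ.filter (fun w : Fin n => w.val < m), F w (ξ w p) • I w)
      + (∑ s ∈ Finset.univ.filter (fun s : Fin n => m ≤ s.val),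
          G s (ξ (u s) p) • I s)
      + ∑ s ∈ Finset.univ.filter (fun s : Fin n => m ≤ s.val),
          (T s p * deriv (F (u s)) (ξ (u s) p)) • I s) :
    ContinuousOn φ Ω
    ∧ ∀ p ∈ Ω, ∃ D : A, ∀ h₁ h₂ h₃ : ℝ,
        Tendsto (fun ε : ℝ => ε⁻¹ • (φ (p + ε • (h₁, h₂, h₃)) - φ p))
          (nhdsWithin 0 (Ioi 0))
          (nhds ((h₁ • (1 : A) + h₂ • e₂ + h₃ • e₃) * D)) := by
  set W := univ.filter fun w : Fin n => w.val < m
  set S := univ.filter fun s : Fin n => m ≤ s.val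
  have hW (r : Fin n) : r ∈ W ↔ r.val < m := mem_filter_univ r
  have hS (s : Fin n) : s ∈ S ↔ m ≤ s.val := mem_filter_univ s
  obtain rfl : ξ = fun w => ⇑(linComb3 1 (a w) (b w)) := by ext w p; simp [hξ]
  obtain rfl : T = fun s => ⇑(linComb3 0 (a s) (b s)) := by ext s p; simp [hT]
  obtain rfl : φ = explicitFormula I W S u (fun w => linComb3 1 (a w) (b w))
      (fun s => linComb3 0 (a s) (b s)) F G := by
    ext p
    rw [hφ, explicitFormula, cartanElt, add_assoc, ← sum_add_distrib]
    simp only [add_smul]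
  have hmonogenic := explicitFormula_monogenic (Ω := Ω) (M := fun s => linComb3 0 (a s) (b s))
    (fun r hr s hs => hidem r s ((hW r).1 hr) ((hW s).1 hs))
    (fun s hs => (hW _).2 (hu s ((hS s).1 hs)))
    (fun s hs r hr => hmul3 s ((hS s).1 hs) r ((hW r).1 hr))
    (fun s hs p hp => hrad s p ((hS s).1 hs) ((hS p).1 hp))
    (fun w hw => isOpenMap_linComb3_one (hab w ((hW w).1 hw)) Ω hΩ)
    (fun w hw => hF w ((hW w).1 hw)) (fun s hs => hG s ((hS s).1 hs))
  refine ⟨hmonogenic.1, fun p hp => (hmonogenic.2 p hp).imp fun D hD h₁ h₂ h₃ => ?_⟩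
  have hSW : S = Wᶜ := by ext; simp [W, S]
  convert hD (h₁, h₂, h₃) using 3
  rw [cartanElt_linComb3, cartanElt_one_zero hone, he₂, he₃, sum_smul_eq_cartanElt hSW,
    sum_smul_eq_cartanElt hSW]

/-- In `A_n^m` with trivial multiplication on the radical, the function
`Φ(ζ) = Σ_u F_u(ξ_u) I_u + Σ_s G_s(ξ_{u_s}) I_s + Σ_s T_s F'_{u_s}(ξ_{u_s}) I_s`
built from holomorphic functions `F_u : D_u → ℂ`, `G_s : D_{u_s} → ℂ` is
monogenic in `Ω_ζ`: continuous and Gateaux differentiable. -/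
theorem explicit_formula_is_monogenic (n m : ℕ) (hm : m ≤ n) (A : Type*)
    [NormedCommRing A] [NormedAlgebra ℂ A]
    (I : Module.Basis (Fin n) ℂ A)
    (hidem : ∀ r s : Fin n, r.val < m → s.val < m →
      I r * I s = if r = s then I r else 0)
    (u : Fin n → Fin n)
    (hu : ∀ s : Fin n, m ≤ s.val → (u s).val < m)
    (hmul3 : ∀ s : Fin n, m ≤ s.val → ∀ r : Fin n, r.val < m →
      I r * I s = if r = u s then I s else 0)
    -- trivial multiplication on the radical
    (hrad : ∀ s p : Fin n, m ≤ s.val → m ≤ p.val → I s * I p = 0)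
    (hone : ∑ w ∈ Finset.univ.filter (fun w : Fin n => w.val < m), I w = 1)
    (a b : Fin n → ℂ) (e₂ e₃ : A)
    (he₂ : e₂ = ∑ r, a r • I r) (he₃ : e₃ = ∑ r, b r • I r)
    (hindep : LinearIndependent ℝ ![(1 : A), e₂, e₃])
    (hab : ∀ w : Fin n, w.val < m → (a w).im ≠ 0 ∨ (b w).im ≠ 0)
    (Ω : Set (ℝ × ℝ × ℝ)) (hΩ : IsOpen Ω)
    (ξ : Fin n → (ℝ × ℝ × ℝ) → ℂ)
    (hξ : ∀ w p, ξ w p = (p.1 : ℂ) + (p.2.1 : ℂ) * a w + (p.2.2 : ℂ) * b w)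
    (T : Fin n → (ℝ × ℝ × ℝ) → ℂ)
    (hT : ∀ s p, T s p = (p.2.1 : ℂ) * a s + (p.2.2 : ℂ) * b s)
    (F G : Fin n → ℂ → ℂ)
    (hF : ∀ w : Fin n, w.val < m → DifferentiableOn ℂ (F w) (ξ w '' Ω))
    (hG : ∀ s : Fin n, m ≤ s.val → DifferentiableOn ℂ (G s) (ξ (u s) '' Ω))
    (φ : ℝ × ℝ × ℝ → A)
    (hφ : ∀ p, φ p =
      (∑ w ∈ Finset.univ.filter (fun w : Fin n => w.val < m), F w (ξ w p) • I w)
      + (∑ s ∈ Finset.univ.filter (fun s : Fin n => m ≤ s.val),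
          G s (ξ (u s) p) • I s)
      + ∑ s ∈ Finset.univ.filter (fun s : Fin n => m ≤ s.val),
          (T s p * deriv (F (u s)) (ξ (u s) p)) • I s) :
    ContinuousOn φ Ω
    ∧ ∀ p ∈ Ω, ∃ D : A, ∀ h₁ h₂ h₃ : ℝ,
        Tendsto (fun ε : ℝ => ε⁻¹ • (φ (p + ε • (h₁, h₂, h₃)) - φ p))
          (nhdsWithin 0 (Ioi 0))
          (nhds ((h₁ • (1 : A) + h₂ • e₂ + h₃ • e₃) * D)) :=
  explicit_formula_is_monogenic_general n m A I hidem u hu hmul3 hrad hone a b e₂ e₃ he₂ he₃ hab Ω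
    hΩ ξ hξ T hT F G hF hG φ hφ
end

section
/- Let γ be a closed rectifiable Jordan curve in ℂ surrounding ξ_u and not surrounding or meeting any ξ_q for q ≠ u (q = 1,...,m), and let F be holomorphic in a neighborhood of γ and its interior. In A_n^m with trivial radical multiplication, (1/(2πi)) I_u ∮_γ F(t)(t e_1 − ζ)^{-1} dt = F(ξ_u) I_u + Σ_{s : u_s = u, s > m} T_s F'(ξ_u) I_s, where T_s = y a_s + z b_s. -/
/-!
Write `ζ = x·1 + Σ_r T_r I_r`. For an idempotent `I_q` this gives
`I_q (t e₁ - ζ) = (t - ξ_q) I_q - N_q` with `N_q = Σ_{u_s = q} T_s I_s`, and since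
`I_q N_q = N_q` and `N_q² = 0`, the principal part `(t - ξ_q)⁻¹ I_q + (t - ξ_q)⁻² N_q`
times `t e₁ - ζ` is `I_q`. Summing over `q` shows that `t e₁ - ζ` is invertible away from
the `ξ_q`, and then `I_w (t e₁ - ζ)⁻¹` is the principal part at `ξ_w`. Integrated against `F`,
its two terms are the Cauchy integral formulas for `F (ξ_w)` and `F' (ξ_w)`.
-/

open Metric

section Algebra

variable {A : Type*} [CommRing A]

theorem isUnit_of_sum_mul_eq {ι : Type*} (S : Finset ι) {e p : ι → A} {x : A}
    (hone : ∑ i ∈ S, e i = 1) (h : ∀ i ∈ S, p i * x = e i) : IsUnit x :=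
  IsUnit.of_mul_eq_one_right (∑ i ∈ S, p i) <| by
    rw [Finset.sum_mul, ← hone]
    exact Finset.sum_congr rfl h

theorem inv_smul_add_inv_sq_smul_mul_eq {K : Type*} [Field K] [Algebra K A] {e N x : A} {d : K}
    (he : e * e = e) (heN : e * N = N) (hN : N * N = 0) (hd : d ≠ 0)
    (hx : e * x = d • e - N) :
    (d⁻¹ • e + (d ^ 2)⁻¹ • N) * x = e := by
  have hfix : (d⁻¹ • e + (d ^ 2)⁻¹ • N) * e = d⁻¹ • e + (d ^ 2)⁻¹ • N := by
    rw [add_mul, smul_mul_assoc, smul_mul_assoc, he, mul_comm N, heN]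
  calc (d⁻¹ • e + (d ^ 2)⁻¹ • N) * x = (d⁻¹ • e + (d ^ 2)⁻¹ • N) * (d • e - N) := by
        rw [← hx, ← mul_assoc, hfix]
    _ = e := by
        simp only [add_mul, mul_sub, smul_mul_assoc, mul_smul_comm, he, mul_comm N e, heN, hN,
          smul_zero, add_zero, smul_add, smul_smul]
        rw [mul_inv_cancel₀ hd, one_smul, sq, mul_inv, ← mul_assoc, mul_inv_cancel₀ hd, one_mul,
          add_sub_cancel_right]

end Algebra

section CartanBasis

variable {A : Type*} [CommRing A] [Algebra ℂ A] {n : ℕ} (m : ℕ) (I : Fin n → A)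
  (u : Fin n → Fin n)

structure CartanMultiplication : Prop where
  idem_mul_idem : ∀ r s : Fin n, r.val < m → s.val < m → I r * I s = if r = s then I r else 0
  idem_mul_rad : ∀ s : Fin n, m ≤ s.val → ∀ r : Fin n, r.val < m →
    I r * I s = if r = u s then I s else 0
  rad_mul_rad : ∀ s p : Fin n, m ≤ s.val → m ≤ p.val → I s * I p = 0

def radicalFiberSum (f : Fin n → ℂ) (q : Fin n) : A :=
  ∑ s ∈ Finset.univ.filter (fun s : Fin n => m ≤ s.val ∧ u s = q), f s • I s

variable {m I u}

theorem idem_mul_sum_smul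
    (hI : CartanMultiplication m I u)
    (f : Fin n → ℂ) {q : Fin n} (hq : q.val < m) :
    I q * ∑ r, f r • I r = f q • I q + radicalFiberSum m I u f q := by
  have hterm : ∀ r, I q * (f r • I r)
      = (if r = q then f r • I r else 0) + (if m ≤ r.val ∧ u r = q then f r • I r else 0) := by
    intro r
    rw [mul_smul_comm]
    by_cases hr : r.val < m
    · have hnot : ¬ (m ≤ r.val ∧ u r = q) := fun h => by omega
      rw [hI.idem_mul_idem q r hq hr, if_neg hnot, add_zero]
      by_cases hrq : r = q
      · rw [if_pos hrq.symm, if_pos hrq, hrq]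
      · rw [if_neg (Ne.symm hrq), if_neg hrq, smul_zero]
    · have hrq : r ≠ q := fun h => hr (h ▸ hq)
      rw [hI.idem_mul_rad r (le_of_not_gt hr) q hq, if_neg hrq, zero_add]
      by_cases hur : u r = q
      · rw [if_pos hur.symm, if_pos ⟨le_of_not_gt hr, hur⟩]
      · rw [if_neg (Ne.symm hur), if_neg (fun h => hur h.2), smul_zero]
  rw [Finset.mul_sum, Finset.sum_congr rfl fun r _ => hterm r, Finset.sum_add_distrib,
    Finset.sum_ite_eq', if_pos (Finset.mem_univ q), radicalFiberSum, Finset.sum_filter]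

theorem idem_mul_radicalFiberSum
    (hI : CartanMultiplication m I u)
    (f : Fin n → ℂ) {q : Fin n} (hq : q.val < m) :
    I q * radicalFiberSum m I u f q = radicalFiberSum m I u f q := by
  rw [radicalFiberSum, Finset.mul_sum]
  refine Finset.sum_congr rfl fun s hs => ?_
  obtain ⟨hsm, hus⟩ := (Finset.mem_filter.mp hs).2
  rw [mul_smul_comm, hI.idem_mul_rad s hsm q hq, if_pos hus.symm]

theorem radicalFiberSum_mul_radicalFiberSum
    (hI : CartanMultiplication m I u)
    (f g : Fin n → ℂ) (q : Fin n) :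
    radicalFiberSum m I u f q * radicalFiberSum m I u g q = 0 := by
  rw [radicalFiberSum, radicalFiberSum, Finset.sum_mul_sum]
  refine Finset.sum_eq_zero fun s hs => Finset.sum_eq_zero fun p hp => ?_
  rw [smul_mul_smul_comm,
    hI.rad_mul_rad s p (Finset.mem_filter.mp hs).2.1 (Finset.mem_filter.mp hp).2.1, smul_zero]

end CartanBasis

section Resolvent

variable {A : Type*} [CommRing A] [Algebra ℂ A] {n m : ℕ} {I : Fin n → A} {u : Fin n → Fin n}
  {T ξ : Fin n → ℂ} {ζ : A} {c₀ : ℂ}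

theorem eq_smul_one_add_sum_smul {a b : Fin n → ℂ} {c₁ c₂ : ℂ} {e₂ e₃ : A}
    (he₂ : e₂ = ∑ r, a r • I r) (he₃ : e₃ = ∑ r, b r • I r)
    (hζ : ζ = c₀ • (1 : A) + c₁ • e₂ + c₂ • e₃) (hT : ∀ s, T s = c₁ * a s + c₂ * b s) :
    ζ = c₀ • (1 : A) + ∑ r, T r • I r := by
  rw [hζ, he₂, he₃, Finset.smul_sum, Finset.smul_sum, add_assoc, ← Finset.sum_add_distrib]
  simp only [hT, add_smul, smul_smul]

theorem idem_mul_resolvent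
    (hI : CartanMultiplication m I u)
    (hζ : ζ = c₀ • (1 : A) + ∑ r, T r • I r) {q : Fin n} (hq : q.val < m)
    (hξ : ξ q = c₀ + T q) (t : ℂ) :
    I q * (algebraMap ℂ A t - ζ) = (t - ξ q) • I q - radicalFiberSum m I u T q := by
  rw [hζ, hξ, mul_sub, mul_add, Algebra.algebraMap_eq_smul_one, mul_smul_comm, mul_smul_comm,
    mul_one, idem_mul_sum_smul hI T hq, sub_smul, add_smul]
  abel

theorem principalPart_mul_resolvent
    (hI : CartanMultiplication m I u)
    (hζ : ζ = c₀ • (1 : A) + ∑ r, T r • I r) {q : Fin n} (hq : q.val < m)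
    (hξ : ξ q = c₀ + T q) {t : ℂ} (ht : t ≠ ξ q) :
    ((t - ξ q)⁻¹ • I q + ((t - ξ q) ^ 2)⁻¹ • radicalFiberSum m I u T q)
      * (algebraMap ℂ A t - ζ) = I q :=
  inv_smul_add_inv_sq_smul_mul_eq (by simpa using hI.idem_mul_idem q q hq hq)
    (idem_mul_radicalFiberSum hI T hq) (radicalFiberSum_mul_radicalFiberSum hI T T q)
    (sub_ne_zero.mpr ht) (idem_mul_resolvent hI hζ hq hξ t)

theorem isUnit_resolvent
    (hI : CartanMultiplication m I u)
    (hone : ∑ w ∈ Finset.univ.filter (fun w : Fin n => w.val < m), I w = 1)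
    (hζ : ζ = c₀ • (1 : A) + ∑ r, T r • I r) (hξ : ∀ q, ξ q = c₀ + T q)
    {t : ℂ} (ht : ∀ q : Fin n, q.val < m → t ≠ ξ q) :
    IsUnit (algebraMap ℂ A t - ζ) :=
  isUnit_of_sum_mul_eq _ hone fun q hq =>
    have hq : q.val < m := (Finset.mem_filter.mp hq).2
    principalPart_mul_resolvent hI hζ hq (hξ q) (ht q hq)

theorem idem_mul_inverse_resolvent
    (hI : CartanMultiplication m I u)
    (hone : ∑ w ∈ Finset.univ.filter (fun w : Fin n => w.val < m), I w = 1)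
    (hζ : ζ = c₀ • (1 : A) + ∑ r, T r • I r) (hξ : ∀ q, ξ q = c₀ + T q)
    {t : ℂ} (ht : ∀ q : Fin n, q.val < m → t ≠ ξ q) {q : Fin n} (hq : q.val < m) :
    I q * Ring.inverse (algebraMap ℂ A t - ζ)
      = (t - ξ q)⁻¹ • I q + ((t - ξ q) ^ 2)⁻¹ • radicalFiberSum m I u T q := by
  conv_lhs => rw [← principalPart_mul_resolvent hI hζ hq (hξ q) (ht q hq)]
  exact Ring.mul_inverse_cancel_right _ _ (isUnit_resolvent hI hone hζ hξ ht)

end Resolvent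

theorem ContinuousOn.ringInverse {X R : Type*} [TopologicalSpace X] [NormedRing R]
    [HasSummableGeomSeries R] {g : X → R} {s : Set X} (hg : ContinuousOn g s)
    (hunit : ∀ x ∈ s, IsUnit (g x)) : ContinuousOn (fun x => Ring.inverse (g x)) s := by
  intro x hx
  have hinv := NormedRing.inverse_continuousAt (hunit x hx).unit
  rw [(hunit x hx).unit_spec] at hinv
  exact hinv.comp_continuousWithinAt (hg x hx)

theorem circleIntegral_const_mul_of_circleIntegrable {A : Type*} [NormedRing A]
    [NormedAlgebra ℂ A] [CompleteSpace A] (a : A) {f : ℂ → A} {c : ℂ} {R : ℝ}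
    (hf : CircleIntegrable f c R) :
    (∮ z in C(c, R), a * f z) = a * ∮ z in C(c, R), f z := by
  simpa only [circleIntegral, ContinuousLinearMap.mul_apply', map_smul] using
    (ContinuousLinearMap.mul ℂ A a).intervalIntegral_comp_comm hf.out

theorem two_pi_I_inv_smul_circleIntegral_smul_inv_sub_add_inv_sub_sq {E : Type*}
    [NormedAddCommGroup E] [NormedSpace ℂ E] [CompleteSpace E] {U : Set ℂ} (hU : IsOpen U)
    {c ξ : ℂ} {R : ℝ} (hc : closedBall c R ⊆ U) {F : ℂ → ℂ} (hF : DifferentiableOn ℂ F U)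
    (hξ : ξ ∈ ball c R) (v₁ v₂ : E) :
    (2 * Real.pi * Complex.I)⁻¹ •
        ∮ t in C(c, R), F t • ((t - ξ)⁻¹ • v₁ + ((t - ξ) ^ 2)⁻¹ • v₂)
      = F ξ • v₁ + deriv F ξ • v₂ := by
  have hF₁ : DifferentiableOn ℂ (fun t => F t • v₁) U := hF.smul_const v₁
  have hF₂ : DifferentiableOn ℂ (fun t => F t • v₂) U := hF.smul_const v₂
  have hne : ∀ t ∈ sphere c R, t - ξ ≠ 0 := fun t ht =>
    sub_ne_zero.mpr fun h => (mem_ball.mp hξ).ne (h ▸ mem_sphere.mp ht)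
  have hFc : ContinuousOn F (sphere c R) :=
    hF.continuousOn.mono (sphere_subset_closedBall.trans hc)
  have hint₁ : CircleIntegrable (fun t => (t - ξ)⁻¹ • (F t • v₁)) c R :=
    ((continuousOn_id.sub continuousOn_const).inv₀ hne |>.smul
      (hFc.smul continuousOn_const)).circleIntegrable (pos_of_mem_ball hξ).le
  have hint₂ : CircleIntegrable (fun t => ((t - ξ) ^ 2)⁻¹ • (F t • v₂)) c R :=
    (((continuousOn_id.sub continuousOn_const).pow 2).inv₀ (fun t ht => pow_ne_zero 2 (hne t ht))
      |>.smul (hFc.smul continuousOn_const)).circleIntegrable (pos_of_mem_ball hξ).le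
  have hsplit : ∀ t, F t • ((t - ξ)⁻¹ • v₁ + ((t - ξ) ^ 2)⁻¹ • v₂)
      = (t - ξ)⁻¹ • (F t • v₁) + ((t - ξ) ^ 2)⁻¹ • (F t • v₂) := fun t => by
    rw [smul_add, smul_comm (F t), smul_comm (F t)]
  simp only [hsplit]
  rw [circleIntegral.integral_add hint₁ hint₂, smul_add,
    (hF₁.diffContOnCl_ball hc).two_pi_i_inv_smul_circleIntegral_sub_inv_smul hξ,
    Complex.two_pi_I_inv_smul_circleIntegral_sub_sq_inv_smul_of_differentiable hU hc hF₂ hξ,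
    deriv_smul_const (hF.differentiableAt (hU.mem_nhds (hc (ball_subset_closedBall hξ))))]

theorem cauchy_integral_resolvent_general (n m : ℕ) (A : Type*)
    [NormedCommRing A] [NormedAlgebra ℂ A] [CompleteSpace A]
    (I : Module.Basis (Fin n) ℂ A)
    (hidem : ∀ r s : Fin n, r.val < m → s.val < m →
      I r * I s = if r = s then I r else 0)
    (u : Fin n → Fin n)
    (hmul3 : ∀ s : Fin n, m ≤ s.val → ∀ r : Fin n, r.val < m →
      I r * I s = if r = u s then I s else 0)
    (hrad : ∀ s p : Fin n, m ≤ s.val → m ≤ p.val → I s * I p = 0)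
    (hone : ∑ w ∈ Finset.univ.filter (fun w : Fin n => w.val < m), I w = 1)
    (a b : Fin n → ℂ) (x y z : ℝ) (e₂ e₃ ζ : A)
    (he₂ : e₂ = ∑ r, a r • I r) (he₃ : e₃ = ∑ r, b r • I r)
    (hζ : ζ = (x : ℂ) • (1 : A) + (y : ℂ) • e₂ + (z : ℂ) • e₃)
    (ξ : Fin n → ℂ) (hξ : ∀ w, ξ w = (x : ℂ) + (y : ℂ) * a w + (z : ℂ) * b w)
    (T : Fin n → ℂ) (hT : ∀ s, T s = (y : ℂ) * a s + (z : ℂ) * b s)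
    (w : Fin n) (hw : w.val < m)
    -- the circle `Γ` with centre `c` and radius `R` surrounds `ξ_w` and no other `ξ_q`
    (c : ℂ) (R : ℝ) (hin : ξ w ∈ ball c R)
    (hout : ∀ q : Fin n, q.val < m → q ≠ w → ξ q ∉ closedBall c R)
    -- `F` is holomorphic in a neighbourhood of the curve and its interior
    (U : Set ℂ) (hU : IsOpen U) (hUc : closedBall c R ⊆ U)
    (F : ℂ → ℂ) (hF : DifferentiableOn ℂ F U) :
    (2 * Real.pi * Complex.I)⁻¹ •
        (I w * ∮ t in C(c, R), F t • Ring.inverse (algebraMap ℂ A t - ζ))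
      = F (ξ w) • I w
        + ∑ s ∈ Finset.univ.filter (fun s : Fin n => m ≤ s.val ∧ u s = w),
            (T s * deriv F (ξ w)) • I s := by
  have hI : CartanMultiplication m I u := ⟨hidem, hmul3, hrad⟩
  have hζ' : ζ = (x : ℂ) • (1 : A) + ∑ r, T r • I r := eq_smul_one_add_sum_smul he₂ he₃ hζ hT
  have hξ' : ∀ q, ξ q = x + T q := fun q => by rw [hξ, hT]; ring
  have hsph : ∀ t ∈ sphere c R, ∀ q : Fin n, q.val < m → t ≠ ξ q := by
    rintro t ht q hq rfl
    by_cases hqw : q = w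
    · exact (mem_ball.mp (hqw ▸ hin)).ne (mem_sphere.mp ht)
    · exact hout q hq hqw (sphere_subset_closedBall ht)
  have hint : CircleIntegrable (fun t => F t • Ring.inverse (algebraMap ℂ A t - ζ)) c R := by
    refine ((hF.continuousOn.mono (sphere_subset_closedBall.trans hUc)).smul ?_).circleIntegrable
      (pos_of_mem_ball hin).le
    exact ((continuous_algebraMap ℂ A).sub continuous_const).continuousOn.ringInverse
      fun t ht => isUnit_resolvent hI hone hζ' hξ' (hsph t ht)
  calc (2 * Real.pi * Complex.I)⁻¹ •
        (I w * ∮ t in C(c, R), F t • Ring.inverse (algebraMap ℂ A t - ζ))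
      = (2 * Real.pi * Complex.I)⁻¹ • ∮ t in C(c, R),
          F t • ((t - ξ w)⁻¹ • I w + ((t - ξ w) ^ 2)⁻¹ • radicalFiberSum m I u T w) := by
        rw [← circleIntegral_const_mul_of_circleIntegrable _ hint]
        congr 1
        refine circleIntegral.integral_congr (pos_of_mem_ball hin).le fun t ht => ?_
        rw [mul_smul_comm, idem_mul_inverse_resolvent hI hone hζ' hξ' (hsph t ht) hw]
    _ = F (ξ w) • I w + deriv F (ξ w) • radicalFiberSum m I u T w :=
        two_pi_I_inv_smul_circleIntegral_smul_inv_sub_add_inv_sub_sq hU hUc hF hin _ _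
    _ = _ := by
        simp only [radicalFiberSum, Finset.smul_sum, smul_smul, mul_comm (deriv F (ξ w))]

/-- Cauchy-type integral of the resolvent in `A_n^m` with trivial radical
multiplication: for a closed curve (here a circle `|z − c| = R`) surrounding
`ξ_u` and no other `ξ_q`, and `F` holomorphic in a neighborhood of the curve
and its interior,
`(2πi)⁻¹ I_u ∮ F(t)(t e₁ − ζ)⁻¹ dt = F(ξ_u) I_u + Σ_{s : u_s = u} T_s F'(ξ_u) I_s`. -/
theorem cauchy_integral_resolvent (n m : ℕ) (hm : m ≤ n) (A : Type*)
    [NormedCommRing A] [NormedAlgebra ℂ A] [CompleteSpace A]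
    (I : Module.Basis (Fin n) ℂ A)
    (hidem : ∀ r s : Fin n, r.val < m → s.val < m →
      I r * I s = if r = s then I r else 0)
    (u : Fin n → Fin n)
    (hu : ∀ s : Fin n, m ≤ s.val → (u s).val < m)
    (hmul3 : ∀ s : Fin n, m ≤ s.val → ∀ r : Fin n, r.val < m →
      I r * I s = if r = u s then I s else 0)
    (hrad : ∀ s p : Fin n, m ≤ s.val → m ≤ p.val → I s * I p = 0)
    (hone : ∑ w ∈ Finset.univ.filter (fun w : Fin n => w.val < m), I w = 1)
    (a b : Fin n → ℂ) (x y z : ℝ) (e₂ e₃ ζ : A)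
    (he₂ : e₂ = ∑ r, a r • I r) (he₃ : e₃ = ∑ r, b r • I r)
    (hζ : ζ = (x : ℂ) • (1 : A) + (y : ℂ) • e₂ + (z : ℂ) • e₃)
    (ξ : Fin n → ℂ) (hξ : ∀ w, ξ w = (x : ℂ) + (y : ℂ) * a w + (z : ℂ) * b w)
    (T : Fin n → ℂ) (hT : ∀ s, T s = (y : ℂ) * a s + (z : ℂ) * b s)
    (w : Fin n) (hw : w.val < m)
    -- the circle `Γ` with centre `c` and radius `R` surrounds `ξ_w` and no other `ξ_q`
    (c : ℂ) (R : ℝ) (hR : 0 < R) (hin : ξ w ∈ ball c R)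
    (hout : ∀ q : Fin n, q.val < m → q ≠ w → ξ q ∉ closedBall c R)
    -- `F` is holomorphic in a neighbourhood of the curve and its interior
    (U : Set ℂ) (hU : IsOpen U) (hUc : closedBall c R ⊆ U)
    (F : ℂ → ℂ) (hF : DifferentiableOn ℂ F U) :
    (2 * Real.pi * Complex.I)⁻¹ •
        (I w * ∮ t in C(c, R), F t • Ring.inverse (algebraMap ℂ A t - ζ))
      = F (ξ w) • I w
        + ∑ s ∈ Finset.univ.filter (fun s : Fin n => m ≤ s.val ∧ u s = w),
            (T s * deriv F (ξ w)) • I s :=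
  cauchy_integral_resolvent_general n m A I hidem u hmul3 hrad hone a b x y z e₂ e₃ ζ he₂ he₃ hζ ξ
    hξ T hT w hw c R hin hout U hU hUc F hF
end
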